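/- arXiv:1108.0856 — 11 statements merged into one kernel-verified Lean document; each statement's English description precedes it below -/
import Mathlib

section
/- Let U be an n×n unitary complex matrix whose spectrum contains at most two distinct elements. Then there exist real numbers α, β ∈ (−π, π] and an n×n Hermitian unitary matrix M such that U = exp(i(α+β)/2)·( cos((α−β)/2)·I + i·sin((α−β)/2)·M ). -/
/-!
A unitary is normal, so the continuous functional calculus applies to it. Its spectrum lies on the
unit circle, so the two possible eigenvalues are `s = exp (i α)` and `t = exp (i β)` with
`α = arg s`, `β = arg t`. Let `M` be the function taking `1` at `s` and `-1` elsewhere, applied to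
`U`: it is real- and `±1`-valued, hence a Hermitian unitary. Since
`exp (i (α + β) / 2) (cos ((α - β) / 2) ± i sin ((α - β) / 2))` equals `exp (i α)` for the sign `+`
and `exp (i β)` for the sign `-`, the right-hand side of the formula is the functional calculus of a
function that agrees with the identity on the spectrum, i.e. it is `U`.
-/

namespace Complex

lemma exp_I_mul_arg_of_mem_unitary {z : ℂ} (hz : z ∈ unitary ℂ) : exp (I * arg z) = z := by
  simpa [CStarRing.norm_of_mem_unitary hz, mul_comm I] using norm_mul_exp_arg_mul_I z

lemma exp_I_mul_half_add_mul_cos_add_sin (α β : ℝ) :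
    exp (I * ((α + β) / 2)) * (Real.cos ((α - β) / 2) + I * Real.sin ((α - β) / 2)) =
      exp (I * α) := by
  rw [ofReal_cos, ofReal_sin, mul_comm I (sin _), ← exp_mul_I, ← exp_add]
  push_cast
  ring_nf

lemma exp_I_mul_half_add_mul_cos_sub_sin (α β : ℝ) :
    exp (I * ((α + β) / 2)) * (Real.cos ((α - β) / 2) + I * Real.sin ((α - β) / 2) * -1) =
      exp (I * β) := by
  have h := exp_I_mul_half_add_mul_cos_add_sin β α
  rw [← neg_sub α β, neg_div, Real.cos_neg, Real.sin_neg, add_comm (β : ℂ)] at h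
  push_cast at h ⊢
  linear_combination h

end Complex

section

open Complex

variable {A : Type*} [TopologicalSpace A] [Ring A] [StarRing A] [Algebra ℂ A]
  [ContinuousFunctionalCalculus ℂ A IsStarNormal]

theorem exists_eq_exp_smul_cos_add_sin_smul_of_spectrum_subset_pair {u : A}
    (hu : u ∈ unitary A) {s t : ℂ} (hst : spectrum ℂ u ⊆ {s, t}) :
    ∃ α β : ℝ, α ∈ Set.Ioc (-Real.pi) Real.pi ∧ β ∈ Set.Ioc (-Real.pi) Real.pi ∧
      ∃ m : A, IsSelfAdjoint m ∧ m ∈ unitary A ∧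
        u = exp (I * ((α + β) / 2)) •
          ((Real.cos ((α - β) / 2) : ℂ) • (1 : A) + (I * (Real.sin ((α - β) / 2) : ℂ)) • m) := by
  have : IsStarNormal u := isStarNormal_of_mem_unitary hu
  set f : ℂ → ℂ := fun z ↦ if z = s then 1 else -1
  have hf : ContinuousOn f (spectrum ℂ u) := ((Set.toFinite _).subset hst).continuousOn f
  refine ⟨arg s, arg t, arg_mem_Ioc s, arg_mem_Ioc t, cfc f u, ?_, ?_, ?_⟩
  · rw [IsSelfAdjoint, ← cfc_star]
    congr! 2 with z
    by_cases h : z = s <;> simp [f, h]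
  · refine (cfc_unitary_iff f u).mpr fun z _ ↦ ?_
    by_cases h : z = s <;> simp [f, h]
  · set c : ℂ := (Real.cos ((arg s - arg t) / 2) : ℂ)
    set d : ℂ := I * (Real.sin ((arg s - arg t) / 2) : ℂ)
    calc u = cfc id u := (cfc_id ℂ u).symm
      _ = cfc (fun z ↦ exp (I * ((arg s + arg t) / 2)) * (c + d * f z)) u := by
        refine cfc_congr fun z hz ↦ ?_
        have hz_unit := spectrum_subset_unitary_of_mem_unitary hu hz
        by_cases h : z = s
        · subst h
          simp only [f, if_pos, mul_one, c, d, exp_I_mul_half_add_mul_cos_add_sin,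
            exp_I_mul_arg_of_mem_unitary hz_unit, id]
        · obtain rfl : z = t := by simpa [h] using hst hz
          simp only [f, if_neg h, c, d, exp_I_mul_half_add_mul_cos_sub_sin,
            exp_I_mul_arg_of_mem_unitary hz_unit, id]
      _ = _ := by
        rw [cfc_const_mul _ _ u, cfc_add (a := u) (fun _ ↦ c) (fun z ↦ d * f z), cfc_const c u,
          cfc_const_mul d f u, Algebra.algebraMap_eq_smul_one]

end

open Matrix Real
open scoped Matrix.Norms.L2Operator

theorem stmt_2 (n : ℕ) (U : Matrix (Fin n) (Fin n) ℂ)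
    (hU : U ∈ Matrix.unitaryGroup (Fin n) ℂ)
    (hspec : ∃ s t : ℂ, spectrum ℂ U ⊆ {s, t}) :
    ∃ α β : ℝ, α ∈ Set.Ioc (-π) π ∧ β ∈ Set.Ioc (-π) π ∧
      ∃ M : Matrix (Fin n) (Fin n) ℂ, M.IsHermitian ∧ M ∈ Matrix.unitaryGroup (Fin n) ℂ ∧
        U = Complex.exp (Complex.I * ((α + β) / 2)) •
          ((Real.cos ((α - β) / 2) : ℂ) • (1 : Matrix (Fin n) (Fin n) ℂ) +
            (Complex.I * (Real.sin ((α - β) / 2) : ℂ)) • M) := by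
  obtain ⟨s, t, hst⟩ := hspec
  exact exists_eq_exp_smul_cos_add_sin_smul_of_spectrum_subset_pair hU hst
end

section
/- Let U be an n×n unitary complex matrix. Then U is a diagonal matrix if and only if the scattering matrix S(k) = [(k−1)U + (k+1)I]⁻¹ · [(k+1)U + (k−1)I] is diagonal for every real k > 0. -/
open Matrix

theorem stmt_6 (n : ℕ) (U : Matrix (Fin n) (Fin n) ℂ)
    (hU : U ∈ Matrix.unitaryGroup (Fin n) ℂ) :
    U.IsDiag ↔
      ∀ k : ℝ, 0 < k →
        ((((k : ℂ) - 1) • U + ((k : ℂ) + 1) • (1 : Matrix (Fin n) (Fin n) ℂ))⁻¹ *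
            (((k : ℂ) + 1) • U + ((k : ℂ) - 1) • (1 : Matrix (Fin n) (Fin n) ℂ))).IsDiag := by
  constructor
  · intro hD k hk
    rw [Matrix.isDiag_iff_diagonal_diag] at hD
    rw [← hD, ← Matrix.diagonal_one, ← Matrix.diagonal_smul, ← Matrix.diagonal_smul,
      ← Matrix.diagonal_smul, ← Matrix.diagonal_smul, Matrix.diagonal_add, Matrix.diagonal_add, Matrix.inv_diagonal, Matrix.diagonal_mul_diagonal]
    exact Matrix.isDiag_diagonal _
  · intro h
    have h1 := h 1 one_pos
    have e1 : (((1 : ℝ) : ℂ) - 1) = 0 := by norm_num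
    have e2 : (((1 : ℝ) : ℂ) + 1) = 2 := by norm_num
    rw [e1, e2, zero_smul, zero_smul, add_zero, zero_add] at h1
    have hinv : ((2 : ℂ) • (1 : Matrix (Fin n) (Fin n) ℂ))⁻¹ = (2 : ℂ)⁻¹ • 1 := by
      apply Matrix.inv_eq_right_inv
      rw [Matrix.smul_mul, Matrix.mul_smul, one_mul, smul_smul]
      norm_num
    rw [hinv, Matrix.smul_mul, Matrix.one_mul, smul_smul] at h1
    norm_num at h1
    exact h1
end

section
/- Let U be an n×n unitary complex matrix. Then U is Hermitian if and only if the scattering matrix S(k) = [(k−1)U + (k+1)I]⁻¹ · [(k+1)U + (k−1)I] equals U for every real k > 0 (i.e., the scattering matrix is independent of k; the coupling is scale invariant). -/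
open Matrix


lemma aux_det (n : ℕ) (U : Matrix (Fin n) (Fin n) ℂ)
    (hU : U ∈ Matrix.unitaryGroup (Fin n) ℂ) (k : ℝ) (hk : 0 < k) :
    IsUnit (((k : ℂ) - 1) • U + ((k : ℂ) + 1) • (1 : Matrix (Fin n) (Fin n) ℂ)).det := by
  rw [isUnit_iff_ne_zero]
  intro hdet
  obtain ⟨v, hv, hval⟩ := (Matrix.exists_mulVec_eq_zero_iff).2 hdet
  set a : ℂ := (k : ℂ) - 1 with ha_def
  set b : ℂ := (k : ℂ) + 1 with hb_def
  have h1 : a • (U *ᵥ v) + b • v = 0 := by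
    rwa [Matrix.add_mulVec, Matrix.smul_mulVec, Matrix.smul_mulVec,
      Matrix.one_mulVec] at hval
  have h2 : a • (U *ᵥ v) = -(b • v) := by linear_combination (norm := module) h1
  have hUv : star (U *ᵥ v) ⬝ᵥ (U *ᵥ v) = star v ⬝ᵥ v := by
    rw [Matrix.star_mulVec, Matrix.dotProduct_mulVec, Matrix.vecMul_vecMul,
      ← Matrix.star_eq_conjTranspose, hU.1, Matrix.vecMul_one]
  have ha : star a = a := by simp [ha_def]
  have hb : star b = b := by simp [hb_def]
  have key : a * a * (star v ⬝ᵥ v) = b * b * (star v ⬝ᵥ v) := by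
    have h3 := congrArg (fun w => star w ⬝ᵥ w) h2
    simp only [star_smul, smul_dotProduct, dotProduct_smul, star_neg,
      neg_dotProduct, dotProduct_neg, neg_neg, smul_eq_mul, ha, hb, hUv] at h3
    linear_combination h3
  have hvv : star v ⬝ᵥ v ≠ 0 := by
    have hrep : star v ⬝ᵥ v = ((∑ i, Complex.normSq (v i) : ℝ) : ℂ) := by
      simp [dotProduct, Complex.normSq_eq_conj_mul_self]
    rw [hrep, Complex.ofReal_ne_zero]
    obtain ⟨i, hi⟩ := Function.ne_iff.1 hv
    exact ne_of_gt (Finset.sum_pos' (fun j _ => Complex.normSq_nonneg _)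
      ⟨i, Finset.mem_univ i, Complex.normSq_pos.2 hi⟩)
  have hab : a * a = b * b := mul_right_cancel₀ hvv key
  have hk0 : (k : ℂ) = 0 := by
    rw [ha_def, hb_def] at hab
    linear_combination -hab / 4
  exact absurd (Complex.ofReal_eq_zero.1 hk0) (ne_of_gt hk)

theorem stmt_7 (n : ℕ) (U : Matrix (Fin n) (Fin n) ℂ)
    (hU : U ∈ Matrix.unitaryGroup (Fin n) ℂ) :
    U.IsHermitian ↔
      ∀ k : ℝ, 0 < k →
        (((k : ℂ) - 1) • U + ((k : ℂ) + 1) • (1 : Matrix (Fin n) (Fin n) ℂ))⁻¹ *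
            (((k : ℂ) + 1) • U + ((k : ℂ) - 1) • (1 : Matrix (Fin n) (Fin n) ℂ)) = U := by
  have hstar : star U * U = 1 := hU.1
  constructor
  · intro hH k hk
    have hUU : U * U = 1 := by
      have hsU : star U = U := by rw [Matrix.star_eq_conjTranspose]; exact hH
      nth_rewrite 1 [← hsU]
      exact hstar
    set A := ((k : ℂ) - 1) • U + ((k : ℂ) + 1) • (1 : Matrix (Fin n) (Fin n) ℂ) with hA
    have hAU : A * U = ((k : ℂ) + 1) • U + ((k : ℂ) - 1) • (1 : Matrix (Fin n) (Fin n) ℂ) := by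
      rw [hA, Matrix.add_mul, Matrix.smul_mul, Matrix.smul_mul, Matrix.one_mul, hUU]
      abel
    rw [← hAU, ← Matrix.mul_assoc, Matrix.nonsing_inv_mul A (aux_det n U hU k hk), Matrix.one_mul]
  · intro h
    have h2 := h 2 (by norm_num)
    set A := ((2 : ℂ) - 1) • U + ((2 : ℂ) + 1) • (1 : Matrix (Fin n) (Fin n) ℂ) with hA
    have hAinv : A * A⁻¹ = 1 := Matrix.mul_nonsing_inv A (by
      have := aux_det n U hU 2 (by norm_num)
      simpa using this)
    have h3 : A * U = ((2 : ℂ) + 1) • U + ((2 : ℂ) - 1) • (1 : Matrix (Fin n) (Fin n) ℂ) := by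
      calc A * U = A * (A⁻¹ * (((2 : ℂ) + 1) • U + ((2 : ℂ) - 1) • 1)) := by
              rw [show ((2:ℝ):ℂ) = (2:ℂ) by norm_num] at h2
              rw [h2]
        _ = (A * A⁻¹) * (((2 : ℂ) + 1) • U + ((2 : ℂ) - 1) • 1) := by rw [Matrix.mul_assoc]
        _ = _ := by rw [hAinv, Matrix.one_mul]
    have hUU : U * U = 1 := by
      have h4 : ((2 : ℂ) - 1) • (U * U) + ((2 : ℂ) + 1) • U
          = ((2 : ℂ) + 1) • U + ((2 : ℂ) - 1) • (1 : Matrix (Fin n) (Fin n) ℂ) := by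
        rw [← h3, hA, Matrix.add_mul, Matrix.smul_mul, Matrix.smul_mul, Matrix.one_mul]
      have h5 : ((2 : ℂ) - 1) • (U * U) = ((2 : ℂ) - 1) • (1 : Matrix (Fin n) (Fin n) ℂ) := by
        linear_combination (norm := module) h4
      have := smul_right_injective (Matrix (Fin n) (Fin n) ℂ) (by norm_num : (2:ℂ)-1 ≠ 0) h5
      simpa using this
    show Uᴴ = U
    rw [← Matrix.star_eq_conjTranspose]
    calc star U = star U * (U * U) := by rw [hUU, mul_one]
      _ = (star U * U) * U := by rw [mul_assoc]
      _ = U := by rw [hstar, one_mul]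
end

section
/- Let U be an n×n unitary complex matrix. Then U is Hermitian if and only if the scattering matrix S(k) = [(k−1)U + (k+1)I]⁻¹ · [(k+1)U + (k−1)I] is Hermitian for every real k > 0. -/
open Matrix

private lemma dot_self_zero (n : ℕ) {x : Fin n → ℂ}
    (h : dotProduct (star x) x = 0) : x = 0 := by
  have hsum : (↑(∑ i, Complex.normSq (x i)) : ℂ) = 0 := by
    rw [Complex.ofReal_sum]
    rw [dotProduct] at h
    convert h using 2 with i
    rw [Pi.star_apply, Complex.star_def, ← Complex.normSq_eq_conj_mul_self]
  have hsum' : ∑ i, Complex.normSq (x i) = 0 := by exact_mod_cast hsum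
  funext i
  have := (Finset.sum_eq_zero_iff_of_nonneg (fun i _ => Complex.normSq_nonneg (x i))).mp
    hsum' i (Finset.mem_univ i)
  simpa using Complex.normSq_eq_zero.mp this

private lemma norm_dot (n : ℕ) (U : Matrix (Fin n) (Fin n) ℂ)
    (hU : U ∈ Matrix.unitaryGroup (Fin n) ℂ) (x : Fin n → ℂ) :
    dotProduct (star (U.mulVec x)) (U.mulVec x) = dotProduct (star x) x := by
  have h1 : Uᴴ * U = 1 := hU.1
  rw [star_mulVec, dotProduct_mulVec, vecMul_vecMul, h1, vecMul_one]

private lemma isUnitA (n : ℕ) (U : Matrix (Fin n) (Fin n) ℂ)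
    (hU : U ∈ Matrix.unitaryGroup (Fin n) ℂ) (k : ℝ) (hk : 0 < k) :
    IsUnit (((k : ℂ) - 1) • U + ((k : ℂ) + 1) • (1 : Matrix (Fin n) (Fin n) ℂ)) := by
  rw [← Matrix.mulVec_injective_iff_isUnit]
  intro v w hvw
  have hx : (((k : ℂ) - 1) • U + ((k : ℂ) + 1) • (1 : Matrix (Fin n) (Fin n) ℂ)).mulVec (v - w) = 0 := by
    rw [Matrix.mulVec_sub, hvw, sub_self]
  set x := v - w with hxdef
  rw [Matrix.add_mulVec, smul_mulVec, smul_mulVec, one_mulVec] at hx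
  have key : ((k : ℂ) - 1) • U.mulVec x = -(((k : ℂ) + 1) • x) :=
    eq_neg_of_add_eq_zero_left hx
  have hdot : dotProduct (star (((k : ℂ) - 1) • U.mulVec x)) (((k : ℂ) - 1) • U.mulVec x)
      = dotProduct (star (-(((k : ℂ) + 1) • x))) (-(((k : ℂ) + 1) • x)) := by rw [key]
  have hL : dotProduct (star (((k : ℂ) - 1) • U.mulVec x)) (((k : ℂ) - 1) • U.mulVec x)
      = (starRingEnd ℂ ((k : ℂ) - 1) * ((k : ℂ) - 1)) * dotProduct (star x) x := by
    rw [star_smul, smul_dotProduct, dotProduct_smul, norm_dot n U hU x]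
    simp [mul_assoc, Complex.star_def]
  have hR : dotProduct (star (-(((k : ℂ) + 1) • x))) (-(((k : ℂ) + 1) • x))
      = (starRingEnd ℂ ((k : ℂ) + 1) * ((k : ℂ) + 1)) * dotProduct (star x) x := by
    rw [star_neg, star_smul, neg_dotProduct, dotProduct_neg, neg_neg,
      smul_dotProduct, dotProduct_smul]
    simp [mul_assoc, Complex.star_def]
  rw [hL, hR] at hdot
  have hc1 : starRingEnd ℂ ((k : ℂ) - 1) = (k : ℂ) - 1 := by
    simp [Complex.conj_ofReal]
  have hc2 : starRingEnd ℂ ((k : ℂ) + 1) = (k : ℂ) + 1 := by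
    simp [Complex.conj_ofReal]
  rw [hc1, hc2] at hdot
  have hzero : dotProduct (star x) x = 0 := by
    have hne : (((k : ℂ) - 1) * ((k : ℂ) - 1)) ≠ (((k : ℂ) + 1) * ((k : ℂ) + 1)) := by
      intro h
      have hk0 : (k : ℂ) = 0 := by linear_combination -h / 4
      have : (k : ℂ) ≠ 0 := Complex.ofReal_ne_zero.mpr (ne_of_gt hk)
      exact this hk0
    by_contra hd
    exact hne (mul_right_cancel₀ hd hdot)
  exact sub_eq_zero.mp (dot_self_zero n hzero)

theorem stmt_8 (n : ℕ) (U : Matrix (Fin n) (Fin n) ℂ)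
    (hU : U ∈ Matrix.unitaryGroup (Fin n) ℂ) :
    U.IsHermitian ↔
      ∀ k : ℝ, 0 < k →
        ((((k : ℂ) - 1) • U + ((k : ℂ) + 1) • (1 : Matrix (Fin n) (Fin n) ℂ))⁻¹ *
            (((k : ℂ) + 1) • U + ((k : ℂ) - 1) • (1 : Matrix (Fin n) (Fin n) ℂ))).IsHermitian := by
  constructor
  · intro hH k hk
    set A := ((k : ℂ) - 1) • U + ((k : ℂ) + 1) • (1 : Matrix (Fin n) (Fin n) ℂ) with hA
    set B := ((k : ℂ) + 1) • U + ((k : ℂ) - 1) • (1 : Matrix (Fin n) (Fin n) ℂ) with hB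
    have hAH : A.IsHermitian := by
      rw [Matrix.IsHermitian, hA, conjTranspose_add, conjTranspose_smul, conjTranspose_smul,
        hH.eq, conjTranspose_one]
      simp [Complex.star_def, Complex.conj_ofReal]
    have hBH : B.IsHermitian := by
      rw [Matrix.IsHermitian, hB, conjTranspose_add, conjTranspose_smul, conjTranspose_smul,
        hH.eq, conjTranspose_one]
      simp [Complex.star_def, Complex.conj_ofReal]
    have hcomm : A * B = B * A := by
      rw [hA, hB]
      simp only [Matrix.add_mul, Matrix.mul_add, Matrix.smul_mul, Matrix.mul_smul,
        Matrix.one_mul, Matrix.mul_one]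
      module
    have hAunit : IsUnit A.det := (Matrix.isUnit_iff_isUnit_det A).mp (isUnitA n U hU k hk)
    have hswap : B * A⁻¹ = A⁻¹ * B := by
      calc B * A⁻¹ = A⁻¹ * A * (B * A⁻¹) := by rw [Matrix.nonsing_inv_mul A hAunit, Matrix.one_mul]
        _ = A⁻¹ * (A * B) * A⁻¹ := by simp [Matrix.mul_assoc]
        _ = A⁻¹ * (B * A) * A⁻¹ := by rw [hcomm]
        _ = A⁻¹ * B * (A * A⁻¹) := by simp [Matrix.mul_assoc]
        _ = A⁻¹ * B := by rw [Matrix.mul_nonsing_inv A hAunit, Matrix.mul_one]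
    rw [Matrix.IsHermitian, conjTranspose_mul, hBH.eq, Matrix.conjTranspose_nonsing_inv, hAH.eq,
      hswap]
  · intro h
    have h3 := h 3 (by norm_num)
    set A := ((2 : ℂ)) • U + ((4 : ℂ)) • (1 : Matrix (Fin n) (Fin n) ℂ) with hA
    set B := ((4 : ℂ)) • U + ((2 : ℂ)) • (1 : Matrix (Fin n) (Fin n) ℂ) with hB
    have h3' : (A⁻¹ * B).IsHermitian := by
      have e1 : (((3:ℝ) : ℂ) - 1) = (2 : ℂ) := by norm_num
      have e2 : (((3:ℝ) : ℂ) + 1) = (4 : ℂ) := by norm_num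
      rw [e1, e2] at h3
      exact h3
    have hAu : IsUnit A := by
      have := isUnitA n U hU 3 (by norm_num)
      have e1 : (((3:ℝ) : ℂ) - 1) = (2 : ℂ) := by norm_num
      have e2 : (((3:ℝ) : ℂ) + 1) = (4 : ℂ) := by norm_num
      rwa [e1, e2] at this
    have hAunit : IsUnit A.det := (Matrix.isUnit_iff_isUnit_det A).mp hAu
    have hAHunit : IsUnit Aᴴ.det := by
      rw [← Matrix.star_eq_conjTranspose]
      exact (Matrix.isUnit_iff_isUnit_det _).mp hAu.star
    have heq : Bᴴ * (Aᴴ)⁻¹ = A⁻¹ * B := by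
      rw [← Matrix.conjTranspose_nonsing_inv, ← conjTranspose_mul]
      exact h3'.eq
    have hABh : A * Bᴴ = B * Aᴴ := by
      have h2 := congrArg (fun M => A * M * Aᴴ) heq
      simp only [Matrix.mul_assoc] at h2
      rw [Matrix.nonsing_inv_mul Aᴴ hAHunit, Matrix.mul_one] at h2
      rw [← Matrix.mul_assoc A A⁻¹, Matrix.mul_nonsing_inv A hAunit, Matrix.one_mul] at h2
      exact h2
    have hBHc : Bᴴ = (4 : ℂ) • Uᴴ + (2 : ℂ) • (1 : Matrix (Fin n) (Fin n) ℂ) := by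
      rw [hB, conjTranspose_add, conjTranspose_smul, conjTranspose_smul, conjTranspose_one]
      norm_num
    have hAHc : Aᴴ = (2 : ℂ) • Uᴴ + (4 : ℂ) • (1 : Matrix (Fin n) (Fin n) ℂ) := by
      rw [hA, conjTranspose_add, conjTranspose_smul, conjTranspose_smul, conjTranspose_one]
      norm_num
    rw [hBHc, hAHc, hA, hB] at hABh
    have hUU : U * Uᴴ = 1 := by
      rw [← Matrix.star_eq_conjTranspose]
      exact hU.2
    simp only [Matrix.add_mul, Matrix.mul_add, Matrix.smul_mul, Matrix.mul_smul,
      Matrix.one_mul, Matrix.mul_one, hUU] at hABh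
    have h12 : (12 : ℂ) • Uᴴ = (12 : ℂ) • U := by
      linear_combination (norm := module) hABh
    have : Uᴴ = U := by
      have := smul_right_injective (Matrix (Fin n) (Fin n) ℂ) (by norm_num : (12:ℂ) ≠ 0) h12
      exact this
    exact this
end

section
/- Let n ≥ 2, let a, b ∈ ℂ with |a| = 1 and |a + n·b| = 1, and let U = a·I + b·J (so U is unitary). Then for every real k > 0 there exist complex numbers a(k), b(k) such that the scattering matrix satisfies S(k) = a(k)·I + b(k)·J; in particular S(k) is permutation-symmetric for every k > 0. -/
/-! The matrices `x • I + y • J` form a commutative subalgebra, closed under inversion because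
`J * J = n • J`; explicitly `(x • I + y • J)⁻¹ = x⁻¹ • I - (y / (x * (x + n * y))) • J`, which
exists precisely when `x` and `x + n * y` (the eigenvalues) are nonzero. For `U = a • I + b • J`
the denominator `(k - 1) • U + (k + 1) • I` has eigenvalues `(k - 1) z + (k + 1)` with
`z ∈ {a, a + n * b}` on the unit circle, and these cannot vanish since `|k - 1| < k + 1`. -/

open Matrix

namespace Matrix

variable {ι R : Type*} [Fintype ι]

theorem of_one_mul_of_one [NonAssocSemiring R] :
    (of fun _ _ => (1 : R) : Matrix ι ι R) * of (fun _ _ => 1) =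
      (Fintype.card ι : R) • of fun _ _ => 1 := by
  ext i j
  simp [mul_apply]

variable [DecidableEq ι]

theorem smul_one_add_smul_of_one_mul [CommRing R] (x y x' y' : R) :
    (x • (1 : Matrix ι ι R) + y • of fun _ _ => 1) * (x' • 1 + y' • of fun _ _ => 1) =
      (x * x') • 1 + (x * y' + y * x' + Fintype.card ι * y * y') • of fun _ _ => 1 := by
  simp only [add_mul, mul_add, Matrix.smul_mul, Matrix.mul_smul, one_mul, mul_one,
    of_one_mul_of_one, smul_smul]
  module

theorem inv_smul_one_add_smul_of_one [Field R] {x y : R} (hx : x ≠ 0)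
    (hxy : x + Fintype.card ι * y ≠ 0) :
    (x • (1 : Matrix ι ι R) + y • of fun _ _ => 1)⁻¹ =
      x⁻¹ • 1 + (-y / (x * (x + Fintype.card ι * y))) • of fun _ _ => 1 := by
  have hcoeff : x⁻¹ * y + -y / (x * (x + Fintype.card ι * y)) * x +
      Fintype.card ι * (-y / (x * (x + Fintype.card ι * y))) * y = 0 := by
    apply mul_left_cancel₀ (mul_ne_zero hx hxy)
    field_simp
    ring
  refine inv_eq_left_inv ?_
  rw [smul_one_add_smul_of_one_mul, inv_mul_cancel₀ hx, hcoeff, one_smul, zero_smul, add_zero]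

end Matrix

theorem Complex.sub_one_mul_add_add_one_ne_zero {k : ℝ} (hk : 0 < k) {z : ℂ} (hz : ‖z‖ = 1) :
    (k - 1) * z + (k + 1) ≠ 0 := by
  intro h
  have hlt : |k - 1| < k + 1 := abs_lt.mpr ⟨by linarith, by linarith⟩
  have heq : ((k + 1 : ℝ) : ℂ) = -((k - 1 : ℝ) : ℂ) * z := by
    push_cast
    linear_combination h
  have hnorm := congrArg norm heq
  rw [norm_mul, norm_neg, hz, mul_one, Complex.norm_real, Complex.norm_real, Real.norm_eq_abs,
    Real.norm_eq_abs, abs_of_pos (by linarith)] at hnorm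
  linarith

theorem stmt_9_general (n : ℕ) (a b : ℂ)
    (ha : ‖a‖ = 1) (hab : ‖a + n * b‖ = 1)
    (U : Matrix (Fin n) (Fin n) ℂ)
    (hU : U = a • (1 : Matrix (Fin n) (Fin n) ℂ) + b • Matrix.of (fun _ _ => (1 : ℂ))) :
    ∀ k : ℝ, 0 < k →
      ∃ ak bk : ℂ,
        (((k : ℂ) - 1) • U + ((k : ℂ) + 1) • (1 : Matrix (Fin n) (Fin n) ℂ))⁻¹ *
            (((k : ℂ) + 1) • U + ((k : ℂ) - 1) • (1 : Matrix (Fin n) (Fin n) ℂ)) =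
          ak • (1 : Matrix (Fin n) (Fin n) ℂ) + bk • Matrix.of (fun _ _ => (1 : ℂ)) := by
  intro k hk
  have hden : ((k : ℂ) - 1) • U + ((k : ℂ) + 1) • (1 : Matrix (Fin n) (Fin n) ℂ) =
      ((k - 1) * a + (k + 1)) • 1 + ((k - 1) * b) • of fun _ _ => 1 := by
    rw [hU]; module
  have hnum : ((k : ℂ) + 1) • U + ((k : ℂ) - 1) • (1 : Matrix (Fin n) (Fin n) ℂ) =
      ((k + 1) * a + (k - 1)) • 1 + ((k + 1) * b) • of fun _ _ => 1 := by
    rw [hU]; module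
  have hx := Complex.sub_one_mul_add_add_one_ne_zero hk ha
  have hxy : (k - 1) * a + (k + 1) + Fintype.card (Fin n) * ((k - 1) * b) ≠ 0 := by
    convert Complex.sub_one_mul_add_add_one_ne_zero hk hab using 1
    rw [Fintype.card_fin]
    ring
  rw [hden, hnum, inv_smul_one_add_smul_of_one hx hxy, smul_one_add_smul_of_one_mul]
  exact ⟨_, _, rfl⟩

theorem stmt_9 (n : ℕ) (hn : 2 ≤ n) (a b : ℂ)
    (ha : ‖a‖ = 1) (hab : ‖a + n * b‖ = 1)
    (U : Matrix (Fin n) (Fin n) ℂ)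
    (hU : U = a • (1 : Matrix (Fin n) (Fin n) ℂ) + b • Matrix.of (fun _ _ => (1 : ℂ))) :
    ∀ k : ℝ, 0 < k →
      ∃ ak bk : ℂ,
        (((k : ℂ) - 1) • U + ((k : ℂ) + 1) • (1 : Matrix (Fin n) (Fin n) ℂ))⁻¹ *
            (((k : ℂ) + 1) • U + ((k : ℂ) - 1) • (1 : Matrix (Fin n) (Fin n) ℂ)) =
          ak • (1 : Matrix (Fin n) (Fin n) ℂ) + bk • Matrix.of (fun _ _ => (1 : ℂ)) :=
  stmt_9_general n a b ha hab U hU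
end

section
/- Let α, β ∈ (−π, π], let M be an n×n Hermitian unitary complex matrix, and let U = exp(i(α+β)/2)·( cos((α−β)/2)·I + i·sin((α−β)/2)·M ). Then for every real k > 0, the complex number D(k) = k·cos(α/2)cos(β/2) − (1/k)·sin(α/2)sin(β/2) − i·sin((α+β)/2) is nonzero, and the scattering matrix satisfies S(k) = [ ( k·cos(α/2)cos(β/2) + (1/k)·sin(α/2)sin(β/2) )·I + i·sin((α−β)/2)·M ] / D(k). -/
open Matrix Real

set_option maxHeartbeats 1000000

lemma mulspan {n : ℕ} (a b c d : ℂ) (M : Matrix (Fin n) (Fin n) ℂ) (hM2 : M * M = 1) :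
    (a • (1 : Matrix (Fin n) (Fin n) ℂ) + b • M) * (c • (1 : Matrix (Fin n) (Fin n) ℂ) + d • M)
      = (a*c + b*d) • (1 : Matrix (Fin n) (Fin n) ℂ) + (a*d + b*c) • M := by
  simp only [Matrix.add_mul, Matrix.mul_add, Matrix.smul_mul, Matrix.mul_smul, hM2,
    Matrix.one_mul, Matrix.mul_one, smul_smul]
  module

lemma key1 (K i cx sx cy sy : ℂ) (hi : i^2 = -1)
    (hx : cx^2 + sx^2 = 1) (hy : cy^2 + sy^2 = 1) :
    ((K-1)*((cx*cy - sx*sy) + (sx*cy + cx*sy)*i)*(cx*cy + sx*sy) + (K+1))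
      * ((K-1)*((cx*cy - sx*sy) + (sx*cy + cx*sy)*i)*(cx*cy + sx*sy) + (K+1))
    - ((K-1)*((cx*cy - sx*sy) + (sx*cy + cx*sy)*i)*(i*(sx*cy - cx*sy)))
      * ((K-1)*((cx*cy - sx*sy) + (sx*cy + cx*sy)*i)*(i*(sx*cy - cx*sy)))
    = 4*((cx*cy - sx*sy) + (sx*cy + cx*sy)*i)*(K^2*cx*cy - sx*sy - i*K*(sx*cy + cx*sy)) := by
  linear_combination (((1)*sx^4*cy^4 + (4)*cx*sx^3*cy*sy^3 + (4)*cx*sx^3*cy^3*sy + (-2)*cx^2*sx^2*cy^2*sy^2 + (4)*cx^3*sx*cy*sy^3 + (4)*cx^3*sx*cy^3*sy + (1)*cx^4*sy^4 + (2)*i*sx^4*cy^3*sy + (-2)*i*cx*sx^3*cy^2*sy^2 + (-2)*i*cx*sx^3*cy^4 + (-2)*i*cx^2*sx^2*cy*sy^3 + (2)*i*cx^2*sx^2*cy^3*sy + (2)*i*cx^3*sx*sy^4 + (2)*i*cx^3*sx*cy^2*sy^2 + (-2)*i*cx^4*cy*sy^3 + (-1)*i^2*sx^4*cy^4 + (2)*i^2*cx^2*sx^2*cy^2*sy^2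 + (-1)*i^2*cx^4*sy^4 + (4)*K*sx^2*cy^2 + (-2)*K*sx^4*cy^4 + (8)*K*cx*sx*cy*sy + (-8)*K*cx*sx^3*cy*sy^3 + (-8)*K*cx*sx^3*cy^3*sy + (4)*K*cx^2*sy^2 + (4)*K*cx^2*sx^2*cy^2*sy^2 + (-8)*K*cx^3*sx*cy*sy^3 + (-8)*K*cx^3*sx*cy^3*sy + (-2)*K*cx^4*sy^4 + (-4)*K*i*sx^4*cy^3*sy + (4)*K*i*cx*sx^3*cy^2*sy^2 + (4)*K*i*cx*sx^3*cy^4 + (4)*K*i*cx^2*sx^2*cy*sy^3 + (-4)*K*i*cx^2*sx^2*cy^3*sy + (-4)*K*i*cx^3*sx*sy^4 + (-4)*K*i*cx^3*sx*cy^2*sy^2 + (4)*K*i*cx^4*cy*sy^3 + (2)*K*i^2*sx^4*cy^4 + (-4)*K*i^2*cx^2*sx^2*cy^2*sy^2 + (2)*K*i^2*cx^4*sy^4 + (1)*K^2*sx^4*cy^4 + (4)*K^2*cx*sx^3*cy*sy^3 + (4)*K^2*cx*sx^3*cy^3*sy + (-2)*K^2*cx^2*sx^2*cy^2*sy^2 +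 (4)*K^2*cx^3*sx*cy*sy^3 + (4)*K^2*cx^3*sx*cy^3*sy + (1)*K^2*cx^4*sy^4 + (2)*K^2*i*sx^4*cy^3*sy + (-2)*K^2*i*cx*sx^3*cy^2*sy^2 + (-2)*K^2*i*cx*sx^3*cy^4 + (-2)*K^2*i*cx^2*sx^2*cy*sy^3 + (2)*K^2*i*cx^2*sx^2*cy^3*sy + (2)*K^2*i*cx^3*sx*sy^4 + (2)*K^2*i*cx^3*sx*cy^2*sy^2 + (-2)*K^2*i*cx^4*cy*sy^3 + (-1)*K^2*i^2*sx^4*cy^4 + (2)*K^2*i^2*cx^2*sx^2*cy^2*sy^2 + (-1)*K^2*i^2*cx^4*sy^4))*hi + (((-2)*sy^2 + (1)*sy^4 + (-1)*cy^4 + (1)*sx^2*sy^4 + (-1)*sx^2*cy^4 + (-4)*cx*sx*cy*sy^3 + (-4)*cx*sx*cy^3*sy + (-1)*cx^2*sy^4 + (1)*cx^2*cy^4 + (2)*i*cy*sy + (-2)*i*cy*sy^3 + (-2)*i*cy^3*sy + (-2)*i*sx^2*cy*sy^3 + (-2)*i*sx^2*cy^3*sy + (-2)*i*cx*sx*sy^4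 + (2)*i*cx*sx*cy^4 + (2)*i*cx^2*cy*sy^3 + (2)*i*cx^2*cy^3*sy + (-2)*K*sy^4 + (-4)*K*cy^2 + (2)*K*cy^4 + (-2)*K*sx^2*sy^4 + (2)*K*sx^2*cy^4 + (8)*K*cx*sx*cy*sy^3 + (8)*K*cx*sx*cy^3*sy + (2)*K*cx^2*sy^4 + (-2)*K*cx^2*cy^4 + (-4)*K*i*cy*sy + (4)*K*i*cy*sy^3 + (4)*K*i*cy^3*sy + (4)*K*i*sx^2*cy*sy^3 + (4)*K*i*sx^2*cy^3*sy + (4)*K*i*cx*sx*sy^4 + (-4)*K*i*cx*sx*cy^4 + (-4)*K*i*cx^2*cy*sy^3 + (-4)*K*i*cx^2*cy^3*sy + (-2)*K^2*sy^2 + (1)*K^2*sy^4 + (-1)*K^2*cy^4 + (1)*K^2*sx^2*sy^4 + (-1)*K^2*sx^2*cy^4 + (-4)*K^2*cx*sx*cy*sy^3 + (-4)*K^2*cx*sx*cy^3*sy + (-1)*K^2*cx^2*sy^4 + (1)*K^2*cx^2*cy^4 + (2)*K^2*i*cy*sy + (-2)*K^2*i*cy*sy^3 + (-2)*K^2*i*cy^3*sy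 + (-2)*K^2*i*sx^2*cy*sy^3 + (-2)*K^2*i*sx^2*cy^3*sy + (-2)*K^2*i*cx*sx*sy^4 + (2)*K^2*i*cx*sx*cy^4 + (2)*K^2*i*cx^2*cy*sy^3 + (2)*K^2*i*cx^2*cy^3*sy))*hx + (((-1) + (1)*sy^2 + (-1)*cy^2 + (-4)*cx*sx*cy*sy + (-2)*cx^2*sy^2 + (2)*cx^2*cy^2 + (-2)*i*cy*sy + (-2)*i*cx*sx*sy^2 + (2)*i*cx*sx*cy^2 + (4)*i*cx^2*cy*sy + (-2)*K + (-2)*K*sy^2 + (2)*K*cy^2 + (8)*K*cx*sx*cy*sy + (4)*K*cx^2*sy^2 + (-4)*K*cx^2*cy^2 + (4)*K*i*cy*sy + (4)*K*i*cx*sx*sy^2 + (-4)*K*i*cx*sx*cy^2 + (-8)*K*i*cx^2*cy*sy + (-1)*K^2 + (1)*K^2*sy^2 + (-1)*K^2*cy^2 + (-4)*K^2*cx*sx*cy*sy + (-2)*K^2*cx^2*sy^2 + (2)*K^2*cx^2*cy^2 + (-2)*K^2*i*cy*sy + (-2)*K^2*i*cx*sx*sy^2 + (2)*K^2*i*cx*sx*cy^2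 + (4)*K^2*i*cx^2*cy*sy))*hy

lemma key2 (K i cx sx cy sy : ℂ) (hi : i^2 = -1)
    (hx : cx^2 + sx^2 = 1) (hy : cy^2 + sy^2 = 1) :
    ((K-1)*((cx*cy - sx*sy) + (sx*cy + cx*sy)*i)*(cx*cy + sx*sy) + (K+1))
      * ((K+1)*((cx*cy - sx*sy) + (sx*cy + cx*sy)*i)*(cx*cy + sx*sy) + (K-1))
    - ((K-1)*((cx*cy - sx*sy) + (sx*cy + cx*sy)*i)*(i*(sx*cy - cx*sy)))
      * ((K+1)*((cx*cy - sx*sy) + (sx*cy + cx*sy)*i)*(i*(sx*cy - cx*sy)))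
    = 4*((cx*cy - sx*sy) + (sx*cy + cx*sy)*i)*(K^2*cx*cy + sx*sy) := by
  linear_combination (((-1)*sx^4*cy^4 + (-4)*cx*sx^3*cy*sy^3 + (-4)*cx*sx^3*cy^3*sy + (2)*cx^2*sx^2*cy^2*sy^2 + (-4)*cx^3*sx*cy*sy^3 + (-4)*cx^3*sx*cy^3*sy + (-1)*cx^4*sy^4 + (-2)*i*sx^4*cy^3*sy + (2)*i*cx*sx^3*cy^2*sy^2 + (2)*i*cx*sx^3*cy^4 + (2)*i*cx^2*sx^2*cy*sy^3 + (-2)*i*cx^2*sx^2*cy^3*sy + (-2)*i*cx^3*sx*sy^4 + (-2)*i*cx^3*sx*cy^2*sy^2 + (2)*i*cx^4*cy*sy^3 + (1)*i^2*sx^4*cy^4 + (-2)*i^2*cx^2*sx^2*cy^2*sy^2 + (1)*i^2*cx^4*sy^4 + (1)*K^2*sx^4*cy^4 + (4)*K^2*cx*sx^3*cy*sy^3 + (4)*K^2*cx*sx^3*cy^3*sy + (-2)*K^2*cx^2*sx^2*cy^2*sy^2 + (4)*K^2*cx^3*sx*cy*sy^3 + (4)*K^2*cx^3*sx*cy^3*sy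 + (1)*K^2*cx^4*sy^4 + (2)*K^2*i*sx^4*cy^3*sy + (-2)*K^2*i*cx*sx^3*cy^2*sy^2 + (-2)*K^2*i*cx*sx^3*cy^4 + (-2)*K^2*i*cx^2*sx^2*cy*sy^3 + (2)*K^2*i*cx^2*sx^2*cy^3*sy + (2)*K^2*i*cx^3*sx*sy^4 + (2)*K^2*i*cx^3*sx*cy^2*sy^2 + (-2)*K^2*i*cx^4*cy*sy^3 + (-1)*K^2*i^2*sx^4*cy^4 + (2)*K^2*i^2*cx^2*sx^2*cy^2*sy^2 + (-1)*K^2*i^2*cx^4*sy^4))*hi + (((2)*sy^2 + (-1)*sy^4 + (1)*cy^4 + (-1)*sx^2*sy^4 + (1)*sx^2*cy^4 + (4)*cx*sx*cy*sy^3 + (4)*cx*sx*cy^3*sy + (1)*cx^2*sy^4 + (-1)*cx^2*cy^4 + (-2)*i*cy*sy + (2)*i*cy*sy^3 + (2)*i*cy^3*sy + (2)*i*sx^2*cy*sy^3 + (2)*i*sx^2*cy^3*sy + (2)*i*cx*sx*sy^4 + (-2)*i*cx*sx*cy^4 + (-2)*i*cx^2*cy*sy^3 + (-2)*i*cx^2*cy^3*sy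 + (-2)*K^2*sy^2 + (1)*K^2*sy^4 + (-1)*K^2*cy^4 + (1)*K^2*sx^2*sy^4 + (-1)*K^2*sx^2*cy^4 + (-4)*K^2*cx*sx*cy*sy^3 + (-4)*K^2*cx*sx*cy^3*sy + (-1)*K^2*cx^2*sy^4 + (1)*K^2*cx^2*cy^4 + (2)*K^2*i*cy*sy + (-2)*K^2*i*cy*sy^3 + (-2)*K^2*i*cy^3*sy + (-2)*K^2*i*sx^2*cy*sy^3 + (-2)*K^2*i*sx^2*cy^3*sy + (-2)*K^2*i*cx*sx*sy^4 + (2)*K^2*i*cx*sx*cy^4 + (2)*K^2*i*cx^2*cy*sy^3 + (2)*K^2*i*cx^2*cy^3*sy))*hx + (((1) + (-1)*sy^2 + (1)*cy^2 + (4)*cx*sx*cy*sy + (2)*cx^2*sy^2 + (-2)*cx^2*cy^2 + (2)*i*cy*sy + (2)*i*cx*sx*sy^2 + (-2)*i*cx*sx*cy^2 + (-4)*i*cx^2*cy*sy + (-1)*K^2 + (1)*K^2*sy^2 + (-1)*K^2*cy^2 + (-4)*K^2*cx*sx*cy*sy + (-2)*K^2*cx^2*sy^2 + (2)*K^2*cx^2*cy^2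 + (-2)*K^2*i*cy*sy + (-2)*K^2*i*cx*sx*sy^2 + (2)*K^2*i*cx*sx*cy^2 + (4)*K^2*i*cx^2*cy*sy))*hy


theorem stmt_10 (n : ℕ) (α β : ℝ)
    (hα : α ∈ Set.Ioc (-π) π) (hβ : β ∈ Set.Ioc (-π) π)
    (M : Matrix (Fin n) (Fin n) ℂ)
    (hM : M.IsHermitian) (hMu : M ∈ Matrix.unitaryGroup (Fin n) ℂ)
    (U : Matrix (Fin n) (Fin n) ℂ)
    (hU : U = Complex.exp (Complex.I * ((α + β) / 2)) •
        ((Real.cos ((α - β) / 2) : ℂ) • (1 : Matrix (Fin n) (Fin n) ℂ) +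
          (Complex.I * (Real.sin ((α - β) / 2) : ℂ)) • M)) :
    ∀ k : ℝ, 0 < k →
      ((k * Real.cos (α / 2) * Real.cos (β / 2)
          - (1 / k) * Real.sin (α / 2) * Real.sin (β / 2) : ℝ) : ℂ)
          - Complex.I * (Real.sin ((α + β) / 2) : ℂ) ≠ 0 ∧
      (((k : ℂ) - 1) • U + ((k : ℂ) + 1) • (1 : Matrix (Fin n) (Fin n) ℂ))⁻¹ *
          (((k : ℂ) + 1) • U + ((k : ℂ) - 1) • (1 : Matrix (Fin n) (Fin n) ℂ)) =
        (((k * Real.cos (α / 2) * Real.cos (β / 2)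
            - (1 / k) * Real.sin (α / 2) * Real.sin (β / 2) : ℝ) : ℂ)
            - Complex.I * (Real.sin ((α + β) / 2) : ℂ))⁻¹ •
          (((k * Real.cos (α / 2) * Real.cos (β / 2)
              + (1 / k) * Real.sin (α / 2) * Real.sin (β / 2) : ℝ) : ℂ) •
              (1 : Matrix (Fin n) (Fin n) ℂ) +
            (Complex.I * (Real.sin ((α - β) / 2) : ℂ)) • M) := by
  intro k hk
  have hk0 : (k:ℂ) ≠ 0 := by exact_mod_cast hk.ne'
  -- Part 1 : D ≠ 0
  have hD : (((k * Real.cos (α / 2) * Real.cos (β / 2) - (1 / k) * Real.sin (α / 2) * Real.sin (β / 2) : ℝ) : ℂ) - Complex.I * ((Real.sin ((α + β) / 2) : ℝ) : ℂ)) ≠ 0 := by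
    intro h0
    have hre : (k * Real.cos (α / 2) * Real.cos (β / 2)
        - (1 / k) * Real.sin (α / 2) * Real.sin (β / 2) : ℝ) = 0 := by
      have h1 := congrArg Complex.re h0
      simp only [Complex.sub_re, Complex.ofReal_re, Complex.mul_re, Complex.I_re,
        Complex.I_im, Complex.ofReal_im, zero_mul, one_mul, mul_zero, sub_zero,
        zero_sub, Complex.zero_re, sub_neg_eq_add, add_zero, neg_zero] at h1
      linarith
    have him : Real.sin ((α + β) / 2) = 0 := by
      have h1 := congrArg Complex.im h0
      simp only [Complex.sub_im, Complex.ofReal_im, Complex.mul_im, Complex.I_re,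
        Complex.I_im, Complex.ofReal_re, zero_mul, one_mul, mul_zero, sub_zero,
        zero_sub, Complex.zero_im, zero_add, add_zero, neg_eq_zero] at h1
      linarith
    have ht1 : -π < (α + β) / 2 := by have := hα.1; have := hβ.1; linarith
    have ht2 : (α + β) / 2 ≤ π := by have := hα.2; have := hβ.2; linarith
    rcases lt_or_eq_of_le ht2 with hlt | heq
    · have ht0 : (α + β) / 2 = 0 :=
        (Real.sin_eq_zero_iff_of_lt_of_lt ht1 hlt).mp him
      have hβα : β = -α := by linarith
      rw [hβα] at hre
      rw [show (-α) / 2 = -(α/2) by ring, Real.cos_neg, Real.sin_neg] at hre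
      have hre' : k * (k * Real.cos (α/2) * Real.cos (α/2)
          - 1 / k * Real.sin (α/2) * -Real.sin (α/2)) = 0 := by rw [hre]; ring
      have hre2 : k * k * (Real.cos (α/2) * Real.cos (α/2))
          + Real.sin (α/2) * Real.sin (α/2) = 0 := by
        field_simp at hre'
        linarith
      nlinarith [Real.sin_sq_add_cos_sq (α/2), mul_pos hk hk,
        mul_self_nonneg (Real.cos (α/2)), mul_self_nonneg (Real.sin (α/2)),
        mul_nonneg (mul_pos hk hk).le (mul_self_nonneg (Real.cos (α/2)))]
    · have hαπ : α = π := by have := hα.2; have := hβ.2; linarith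
      have hβπ : β = π := by have := hα.2; have := hβ.2; linarith
      rw [hαπ, hβπ, Real.cos_pi_div_two, Real.sin_pi_div_two] at hre
      have h1k : (0:ℝ) < 1 / k := by positivity
      nlinarith [hre]
  refine ⟨hD, ?_⟩
  -- Part 2
  have hM2 : M * M = 1 := by
    have h1 : star M * M = 1 := hMu.1
    rwa [Matrix.star_eq_conjTranspose, hM.eq] at h1
  have hx : ((Real.cos (α / 2) : ℝ) : ℂ)^2 + ((Real.sin (α / 2) : ℝ) : ℂ)^2 = 1 := by
    norm_cast; exact Real.cos_sq_add_sin_sq _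
  have hy : ((Real.cos (β / 2) : ℝ) : ℂ)^2 + ((Real.sin (β / 2) : ℝ) : ℂ)^2 = 1 := by
    norm_cast; exact Real.cos_sq_add_sin_sq _
  have he : Complex.exp (Complex.I * (((α:ℂ) + (β:ℂ)) / 2)) = (((Real.cos (α / 2) : ℝ) : ℂ)*((Real.cos (β / 2) : ℝ) : ℂ) - ((Real.sin (α / 2) : ℝ) : ℂ)*((Real.sin (β / 2) : ℝ) : ℂ)) + (((Real.sin (α / 2) : ℝ) : ℂ)*((Real.cos (β / 2) : ℝ) : ℂ) + ((Real.cos (α / 2) : ℝ) : ℂ)*((Real.sin (β / 2) : ℝ) : ℂ))*Complex.I := by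
    rw [mul_comm, Complex.exp_mul_I]
    rw [show (((α:ℂ) + (β:ℂ)) / 2) = (((α/2 + β/2 : ℝ)) : ℂ) by push_cast; ring]
    rw [← Complex.ofReal_cos, ← Complex.ofReal_sin, Real.cos_add, Real.sin_add]
    push_cast; ring
  have hc : ((Real.cos ((α - β) / 2) : ℝ) : ℂ) = ((Real.cos (α / 2) : ℝ) : ℂ)*((Real.cos (β / 2) : ℝ) : ℂ) + ((Real.sin (α / 2) : ℝ) : ℂ)*((Real.sin (β / 2) : ℝ) : ℂ) := by
    rw [show (α - β) / 2 = α/2 - β/2 by ring, Real.cos_sub]; push_cast; ring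
  have hs : ((Real.sin ((α - β) / 2) : ℝ) : ℂ) = ((Real.sin (α / 2) : ℝ) : ℂ)*((Real.cos (β / 2) : ℝ) : ℂ) - ((Real.cos (α / 2) : ℝ) : ℂ)*((Real.sin (β / 2) : ℝ) : ℂ) := by
    rw [show (α - β) / 2 = α/2 - β/2 by ring, Real.sin_sub]; push_cast; ring
  have hst : ((Real.sin ((α + β) / 2) : ℝ) : ℂ) = ((Real.sin (α / 2) : ℝ) : ℂ)*((Real.cos (β / 2) : ℝ) : ℂ) + ((Real.cos (α / 2) : ℝ) : ℂ)*((Real.sin (β / 2) : ℝ) : ℂ) := by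
    rw [show (α + β) / 2 = α/2 + β/2 by ring, Real.sin_add]; push_cast; ring
  have hKD : (k:ℂ) * (((k * Real.cos (α / 2) * Real.cos (β / 2) - (1 / k) * Real.sin (α / 2) * Real.sin (β / 2) : ℝ) : ℂ) - Complex.I * ((Real.sin ((α + β) / 2) : ℝ) : ℂ)) = (k:ℂ)^2*((Real.cos (α / 2) : ℝ) : ℂ)*((Real.cos (β / 2) : ℝ) : ℂ) - ((Real.sin (α / 2) : ℝ) : ℂ)*((Real.sin (β / 2) : ℝ) : ℂ) - Complex.I*(k:ℂ)*((Real.sin ((α + β) / 2) : ℝ) : ℂ) := by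
    push_cast
    field_simp
  have hKP : (k:ℂ) * (((k * Real.cos (α / 2) * Real.cos (β / 2) + (1 / k) * Real.sin (α / 2) * Real.sin (β / 2) : ℝ) : ℂ)) = (k:ℂ)^2*((Real.cos (α / 2) : ℝ) : ℂ)*((Real.cos (β / 2) : ℝ) : ℂ) + ((Real.sin (α / 2) : ℝ) : ℂ)*((Real.sin (β / 2) : ℝ) : ℂ) := by
    push_cast
    field_simp
  have hA : ((k : ℂ) - 1) • U + ((k : ℂ) + 1) • (1 : Matrix (Fin n) (Fin n) ℂ) = (((k:ℂ)-1) * Complex.exp (Complex.I * (((α:ℂ) + (β:ℂ)) / 2)) * ((Real.cos ((α - β) / 2) : ℝ) : ℂ) + ((k:ℂ)+1)) • (1 : Matrix (Fin n) (Fin n) ℂ) + (((k:ℂ)-1) * Complex.exp (Complex.I * (((α:ℂ) + (β:ℂ)) / 2)) * (Complex.I * ((Real.sin ((α - β) / 2) : ℝ) : ℂ))) • M := by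
    rw [hU]; module
  have hB : ((k : ℂ) + 1) • U + ((k : ℂ) - 1) • (1 : Matrix (Fin n) (Fin n) ℂ) = (((k:ℂ)+1) * Complex.exp (Complex.I * (((α:ℂ) + (β:ℂ)) / 2)) * ((Real.cos ((α - β) / 2) : ℝ) : ℂ) + ((k:ℂ)-1)) • (1 : Matrix (Fin n) (Fin n) ℂ) + (((k:ℂ)+1) * Complex.exp (Complex.I * (((α:ℂ) + (β:ℂ)) / 2)) * (Complex.I * ((Real.sin ((α - β) / 2) : ℝ) : ℂ))) • M := by
    rw [hU]; module
  have k1 : (((k:ℂ)-1) * Complex.exp (Complex.I * (((α:ℂ) + (β:ℂ)) / 2)) * ((Real.cos ((α - β) / 2) : ℝ) : ℂ) + ((k:ℂ)+1)) * (((k:ℂ)-1) * Complex.exp (Complex.I * (((α:ℂ) + (β:ℂ)) / 2)) * ((Real.cos ((α - β) / 2) : ℝ) : ℂ) + ((k:ℂ)+1)) - (((k:ℂ)-1) * Complex.exp (Complex.I * (((α:ℂ) + (β:ℂ)) / 2)) * (Complex.I * ((Real.sin ((α - β) / 2) : ℝ) : ℂ))) * (((k:ℂ)-1) * Complex.exp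 (Complex.I * (((α:ℂ) + (β:ℂ)) / 2)) * (Complex.I * ((Real.sin ((α - β) / 2) : ℝ) : ℂ))) = 4 * Complex.exp (Complex.I * (((α:ℂ) + (β:ℂ)) / 2)) * ((k:ℂ) * (((k * Real.cos (α / 2) * Real.cos (β / 2) - (1 / k) * Real.sin (α / 2) * Real.sin (β / 2) : ℝ) : ℂ) - Complex.I * ((Real.sin ((α + β) / 2) : ℝ) : ℂ))) := by
    rw [hKD, he, hc, hs, hst]
    linear_combination key1 (k:ℂ) Complex.I ((Real.cos (α / 2) : ℝ) : ℂ) ((Real.sin (α / 2) : ℝ) : ℂ) ((Real.cos (β / 2) : ℝ) : ℂ) ((Real.sin (β / 2) : ℝ) : ℂ) Complex.I_sq hx hy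
  have k2 : (((k:ℂ)-1) * Complex.exp (Complex.I * (((α:ℂ) + (β:ℂ)) / 2)) * ((Real.cos ((α - β) / 2) : ℝ) : ℂ) + ((k:ℂ)+1)) * (((k:ℂ)+1) * Complex.exp (Complex.I * (((α:ℂ) + (β:ℂ)) / 2)) * ((Real.cos ((α - β) / 2) : ℝ) : ℂ) + ((k:ℂ)-1)) - (((k:ℂ)-1) * Complex.exp (Complex.I * (((α:ℂ) + (β:ℂ)) / 2)) * (Complex.I * ((Real.sin ((α - β) / 2) : ℝ) : ℂ))) * (((k:ℂ)+1) * Complex.exp (Complex.I * (((α:ℂ) + (β:ℂ)) / 2)) * (Complex.I * ((Real.sin ((α - β) / 2) : ℝ) : ℂ))) = 4 * Complex.exp (Complex.I * (((α:ℂ) + (β:ℂ)) / 2)) * ((k:ℂ) * (((k * Real.cos (α / 2) * Real.cos (β / 2) + (1 / k) * Real.sin (α / 2) * Real.sin (β / 2) : ℝ) : ℂ))) := by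
    rw [hKP, he, hc, hs]
    linear_combination key2 (k:ℂ) Complex.I ((Real.cos (α / 2) : ℝ) : ℂ) ((Real.sin (α / 2) : ℝ) : ℂ) ((Real.cos (β / 2) : ℝ) : ℂ) ((Real.sin (β / 2) : ℝ) : ℂ) Complex.I_sq hx hy
  have hE0 : Complex.exp (Complex.I * (((α:ℂ) + (β:ℂ)) / 2)) ≠ 0 := Complex.exp_ne_zero _
  have hF0 : ((4:ℂ) * Complex.exp (Complex.I * (((α:ℂ) + (β:ℂ)) / 2)) * (k:ℂ)) ≠ 0 :=
    mul_ne_zero (mul_ne_zero (by norm_num) hE0) hk0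
  have hne : (((4:ℂ) * Complex.exp (Complex.I * (((α:ℂ) + (β:ℂ)) / 2)) * (k:ℂ)) * (((k * Real.cos (α / 2) * Real.cos (β / 2) - (1 / k) * Real.sin (α / 2) * Real.sin (β / 2) : ℝ) : ℂ) - Complex.I * ((Real.sin ((α + β) / 2) : ℝ) : ℂ))) ≠ 0 := mul_ne_zero hF0 hD
  have hright : (((k : ℂ) - 1) • U + ((k : ℂ) + 1) • (1 : Matrix (Fin n) (Fin n) ℂ)) *
      (((((4:ℂ) * Complex.exp (Complex.I * (((α:ℂ) + (β:ℂ)) / 2)) * (k:ℂ)) * (((k * Real.cos (α / 2) * Real.cos (β / 2) - (1 / k) * Real.sin (α / 2) * Real.sin (β / 2) : ℝ) : ℂ) - Complex.I * ((Real.sin ((α + β) / 2) : ℝ) : ℂ))))⁻¹ • ((((k:ℂ)-1) * Complex.exp (Complex.I * (((α:ℂ) + (β:ℂ)) / 2)) * ((Real.cos ((α - β) / 2) : ℝ) : ℂ) + ((k:ℂ)+1)) • (1 : Matrix (Fin n) (Fin n) ℂ) + (-(((k:ℂ)-1) * Complex.exp (Complex.I * (((α:ℂ) + (β:ℂ)) /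 2)) * (Complex.I * ((Real.sin ((α - β) / 2) : ℝ) : ℂ)))) • M)) = 1 := by
    rw [hA, Matrix.mul_smul, mulspan _ _ _ _ M hM2]
    rw [show (((k:ℂ)-1) * Complex.exp (Complex.I * (((α:ℂ) + (β:ℂ)) / 2)) * ((Real.cos ((α - β) / 2) : ℝ) : ℂ) + ((k:ℂ)+1)) * (-(((k:ℂ)-1) * Complex.exp (Complex.I * (((α:ℂ) + (β:ℂ)) / 2)) * (Complex.I * ((Real.sin ((α - β) / 2) : ℝ) : ℂ)))) + (((k:ℂ)-1) * Complex.exp (Complex.I * (((α:ℂ) + (β:ℂ)) / 2)) * (Complex.I * ((Real.sin ((α - β) / 2) : ℝ) : ℂ))) * (((k:ℂ)-1) * Complex.exp (Complex.I * (((α:ℂ) + (β:ℂ)) / 2)) * ((Real.cos ((α - β) / 2) : ℝ) : ℂ) + ((k:ℂ)+1)) = 0 by ring]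
    rw [show (((k:ℂ)-1) * Complex.exp (Complex.I * (((α:ℂ) + (β:ℂ)) / 2)) * ((Real.cos ((α - β) / 2) : ℝ) : ℂ) + ((k:ℂ)+1)) * (((k:ℂ)-1) * Complex.exp (Complex.I * (((α:ℂ) + (β:ℂ)) / 2)) * ((Real.cos ((α - β) / 2) : ℝ) : ℂ) + ((k:ℂ)+1)) + (((k:ℂ)-1) * Complex.exp (Complex.I * (((α:ℂ) + (β:ℂ)) / 2)) * (Complex.I * ((Real.sin ((α - β) / 2) : ℝ) : ℂ))) * (-(((k:ℂ)-1) * Complex.exp (Complex.I * (((α:ℂ) + (β:ℂ)) / 2)) * (Complex.I * ((Real.sin ((α - β) / 2) : ℝ) : ℂ)))) = (((4:ℂ) * Complex.exp (Complex.I * (((α:ℂ) + (β:ℂ)) / 2)) * (k:ℂ)) * (((k * Real.cos (α / 2) * Real.cos (β / 2) - (1 / k) * Real.sin (α / 2) * Real.sin (β / 2) : ℝ) : ℂ) - Complex.I * ((Real.sin ((α + β) / 2) : ℝ) : ℂ))) by linear_combination k1]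
    rw [zero_smul, add_zero, smul_smul, inv_mul_cancel₀ hne, one_smul]
  have hAinv : (((k : ℂ) - 1) • U + ((k : ℂ) + 1) • (1 : Matrix (Fin n) (Fin n) ℂ))⁻¹
      = ((((4:ℂ) * Complex.exp (Complex.I * (((α:ℂ) + (β:ℂ)) / 2)) * (k:ℂ)) * (((k * Real.cos (α / 2) * Real.cos (β / 2) - (1 / k) * Real.sin (α / 2) * Real.sin (β / 2) : ℝ) : ℂ) - Complex.I * ((Real.sin ((α + β) / 2) : ℝ) : ℂ))))⁻¹ • ((((k:ℂ)-1) * Complex.exp (Complex.I * (((α:ℂ) + (β:ℂ)) / 2)) * ((Real.cos ((α - β) / 2) : ℝ) : ℂ) + ((k:ℂ)+1)) • (1 : Matrix (Fin n) (Fin n) ℂ) + (-(((k:ℂ)-1) * Complex.exp (Complex.I * (((α:ℂ) + (β:ℂ)) / 2)) * (Complex.I * ((Real.sin ((α - β) / 2) : ℝ) : ℂ)))) • M) := Matrix.inv_eq_right_inv hright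
  rw [hAinv, hB, Matrix.smul_mul, mulspan _ _ _ _ M hM2]
  rw [show (((k:ℂ)-1) * Complex.exp (Complex.I * (((α:ℂ) + (β:ℂ)) / 2)) * ((Real.cos ((α - β) / 2) : ℝ) : ℂ) + ((k:ℂ)+1)) * (((k:ℂ)+1) * Complex.exp (Complex.I * (((α:ℂ) + (β:ℂ)) / 2)) * (Complex.I * ((Real.sin ((α - β) / 2) : ℝ) : ℂ))) + (-(((k:ℂ)-1) * Complex.exp (Complex.I * (((α:ℂ) + (β:ℂ)) / 2)) * (Complex.I * ((Real.sin ((α - β) / 2) : ℝ) : ℂ)))) * (((k:ℂ)+1) * Complex.exp (Complex.I * (((α:ℂ) + (β:ℂ)) / 2)) * ((Real.cos ((α - β) / 2) : ℝ) : ℂ) + ((k:ℂ)-1)) = ((4:ℂ) * Complex.exp (Complex.I * (((α:ℂ) + (β:ℂ)) / 2)) * (k:ℂ)) * (Complex.I * ((Real.sin ((α - β) / 2) : ℝ) : ℂ)) by ring]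
  rw [show (((k:ℂ)-1) * Complex.exp (Complex.I * (((α:ℂ) + (β:ℂ)) / 2)) * ((Real.cos ((α - β) / 2) : ℝ) : ℂ) + ((k:ℂ)+1)) * (((k:ℂ)+1) * Complex.exp (Complex.I * (((α:ℂ) + (β:ℂ)) / 2)) * ((Real.cos ((α - β) / 2) : ℝ) : ℂ) + ((k:ℂ)-1)) + (-(((k:ℂ)-1) * Complex.exp (Complex.I * (((α:ℂ) + (β:ℂ)) / 2)) * (Complex.I * ((Real.sin ((α - β) / 2) : ℝ) : ℂ)))) * (((k:ℂ)+1) * Complex.exp (Complex.I * (((α:ℂ) + (β:ℂ)) / 2)) * (Complex.I * ((Real.sin ((α - β) / 2) : ℝ) : ℂ))) = ((4:ℂ) * Complex.exp (Complex.I * (((α:ℂ) + (β:ℂ)) / 2)) * (k:ℂ)) * (((k * Real.cos (α / 2) * Real.cos (β / 2) + (1 / k) * Real.sin (α / 2) * Real.sin (β / 2) : ℝ) : ℂ)) by linear_combination k2]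
  rw [smul_add, smul_add, smul_smul, smul_smul, smul_smul, smul_smul]
  rw [show ((((4:ℂ) * Complex.exp (Complex.I * (((α:ℂ) + (β:ℂ)) / 2)) * (k:ℂ)) * (((k * Real.cos (α / 2) * Real.cos (β / 2) - (1 / k) * Real.sin (α / 2) * Real.sin (β / 2) : ℝ) : ℂ) - Complex.I * ((Real.sin ((α + β) / 2) : ℝ) : ℂ))))⁻¹ * (((4:ℂ) * Complex.exp (Complex.I * (((α:ℂ) + (β:ℂ)) / 2)) * (k:ℂ)) * (((k * Real.cos (α / 2) * Real.cos (β / 2) + (1 / k) * Real.sin (α / 2) * Real.sin (β / 2) : ℝ) : ℂ))) = (((k * Real.cos (α / 2) * Real.cos (β / 2) - (1 / k) * Real.sin (α / 2) * Real.sin (β / 2) : ℝ) : ℂ) - Complex.I * ((Real.sin ((α + β) / 2) : ℝ) : ℂ))⁻¹ * (((k * Real.cos (α / 2) * Real.cos (β / 2) + (1 / k) * Real.sin (α / 2) * Real.sin (β / 2) : ℝ) : ℂ)) by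
    rw [_root_.mul_inv_rev, mul_assoc, inv_mul_cancel_left₀ hF0]]
  rw [show ((((4:ℂ) * Complex.exp (Complex.I * (((α:ℂ) + (β:ℂ)) / 2)) * (k:ℂ)) * (((k * Real.cos (α / 2) * Real.cos (β / 2) - (1 / k) * Real.sin (α / 2) * Real.sin (β / 2) : ℝ) : ℂ) - Complex.I * ((Real.sin ((α + β) / 2) : ℝ) : ℂ))))⁻¹ * (((4:ℂ) * Complex.exp (Complex.I * (((α:ℂ) + (β:ℂ)) / 2)) * (k:ℂ)) * (Complex.I * ((Real.sin ((α - β) / 2) : ℝ) : ℂ))) = (((k * Real.cos (α / 2) * Real.cos (β / 2) - (1 / k) * Real.sin (α / 2) * Real.sin (β / 2) : ℝ) : ℂ) - Complex.I * ((Real.sin ((α + β) / 2) : ℝ) : ℂ))⁻¹ * (Complex.I * ((Real.sin ((α - β) / 2) : ℝ) : ℂ)) by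
    rw [_root_.mul_inv_rev, mul_assoc, inv_mul_cancel_left₀ hF0]]
end

section
/- Let α, β ∈ (−π, π], let M be an n×n Hermitian unitary complex matrix, and let U = exp(i(α+β)/2)·( cos((α−β)/2)·I + i·sin((α−β)/2)·M ). Then there exist functions μ, ν from (0,∞) to ℂ such that the scattering matrix satisfies S(k) = μ(k)·I + ν(k)·M for every real k > 0. -/
/-!
Since `M` is a Hermitian unitary, `M² = 1`, so `U` lies in the commutative algebra spanned by `1`
and `M`; there it acts by `exp(iα)` on the `+1`-eigenspace of `M` and by `exp(iβ)` on the
`−1`-eigenspace. Sums, products and inverses in this algebra are computed eigenvalue by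
eigenvalue, so `S(k)` acts by the scalar scattering map `z ↦ ((k+1)z + (k−1)) / ((k−1)z + (k+1))`
on these two eigenvalues; its denominator does not vanish on the unit circle because
`|k − 1| < k + 1` for `k > 0`.
-/

open Matrix Real

namespace Matrix

variable {ι 𝕜 : Type*} [DecidableEq ι] [Field 𝕜] [NeZero (2 : 𝕜)]

/-- For an involution `M`, the matrix acting by `x` on the `+1`-eigenspace of `M` and by `y` on its
`−1`-eigenspace. -/
def ofInvolutionEigenvalues (M : Matrix ι ι 𝕜) (x y : 𝕜) : Matrix ι ι 𝕜 :=
  ((x + y) / 2) • (1 : Matrix ι ι 𝕜) + ((x - y) / 2) • M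

variable {M : Matrix ι ι 𝕜}

theorem smul_one_add_smul_eq_ofInvolutionEigenvalues (a b : 𝕜) :
    a • (1 : Matrix ι ι 𝕜) + b • M = M.ofInvolutionEigenvalues (a + b) (a - b) := by
  unfold ofInvolutionEigenvalues
  match_scalars <;> field_simp <;> ring

theorem ofInvolutionEigenvalues_one_one : M.ofInvolutionEigenvalues 1 1 = 1 := by
  simp [ofInvolutionEigenvalues]

theorem smul_ofInvolutionEigenvalues_add_smul_one (c d x y : 𝕜) :
    c • M.ofInvolutionEigenvalues x y + d • (1 : Matrix ι ι 𝕜) =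
      M.ofInvolutionEigenvalues (c * x + d) (c * y + d) := by
  unfold ofInvolutionEigenvalues
  match_scalars <;> field_simp <;> ring

variable [Fintype ι]

theorem ofInvolutionEigenvalues_mul (hM : M * M = 1) (x y x' y' : 𝕜) :
    M.ofInvolutionEigenvalues x y * M.ofInvolutionEigenvalues x' y' =
      M.ofInvolutionEigenvalues (x * x') (y * y') := by
  simp only [ofInvolutionEigenvalues, Matrix.add_mul, Matrix.mul_add, Matrix.smul_mul,
    Matrix.mul_smul, Matrix.one_mul, Matrix.mul_one, hM]
  match_scalars <;> field_simp <;> ring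

theorem inv_ofInvolutionEigenvalues (hM : M * M = 1) {x y : 𝕜} (hx : x ≠ 0) (hy : y ≠ 0) :
    (M.ofInvolutionEigenvalues x y)⁻¹ = M.ofInvolutionEigenvalues x⁻¹ y⁻¹ := by
  apply inv_eq_right_inv
  rw [ofInvolutionEigenvalues_mul hM, mul_inv_cancel₀ hx, mul_inv_cancel₀ hy,
    ofInvolutionEigenvalues_one_one]

end Matrix

theorem Complex.exp_mul_cos_add_I_mul_sin (z : ℂ) (t : ℝ) :
    Complex.exp z * ((Real.cos t : ℂ) + Complex.I * (Real.sin t : ℂ)) =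
      Complex.exp (z + t * Complex.I) := by
  rw [Complex.ofReal_cos, Complex.ofReal_sin, Complex.exp_add, Complex.exp_mul_I]
  ring

theorem exp_smul_cos_add_sin_smul_eq_ofInvolutionEigenvalues {ι : Type*} [DecidableEq ι]
    (M : Matrix ι ι ℂ) (α β : ℝ) :
    Complex.exp (Complex.I * ((α + β) / 2)) •
        ((Real.cos ((α - β) / 2) : ℂ) • (1 : Matrix ι ι ℂ) +
          (Complex.I * (Real.sin ((α - β) / 2) : ℂ)) • M) =
      M.ofInvolutionEigenvalues (Complex.exp (Complex.I * α)) (Complex.exp (Complex.I * β)) := by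
  rw [smul_add, smul_smul, smul_smul, smul_one_add_smul_eq_ofInvolutionEigenvalues, ← mul_add,
    ← mul_sub]
  congr 1
  · rw [Complex.exp_mul_cos_add_I_mul_sin]
    congr 1; push_cast; ring
  · rw [sub_eq_add_neg, ← mul_neg, ← Complex.ofReal_neg, ← Real.sin_neg, ← Real.cos_neg,
      Complex.exp_mul_cos_add_I_mul_sin]
    congr 1; push_cast; ring

noncomputable def scalarScattering (k : ℝ) (z : ℂ) : ℂ :=
  (((k : ℂ) - 1) * z + ((k : ℂ) + 1))⁻¹ * (((k : ℂ) + 1) * z + ((k : ℂ) - 1))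

theorem scalarScattering_denom_ne_zero {k : ℝ} (hk : 0 < k) {z : ℂ} (hz : ‖z‖ = 1) :
    ((k : ℂ) - 1) * z + ((k : ℂ) + 1) ≠ 0 := by
  intro h
  have hnorm : |k - 1| = |k + 1| := by
    have := congrArg (‖·‖) (eq_neg_of_add_eq_zero_left h)
    simp only [norm_mul, norm_neg, hz, mul_one] at this
    exact_mod_cast this
  rw [abs_of_pos (by linarith : 0 < k + 1)] at hnorm
  have : |k - 1| < k + 1 := abs_lt.2 ⟨by linarith, by linarith⟩
  linarith

theorem stmt_11_general (n : ℕ) (α β : ℝ)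
    (M : Matrix (Fin n) (Fin n) ℂ)
    (hM : M.IsHermitian) (hMu : M ∈ Matrix.unitaryGroup (Fin n) ℂ)
    (U : Matrix (Fin n) (Fin n) ℂ)
    (hU : U = Complex.exp (Complex.I * ((α + β) / 2)) •
        ((Real.cos ((α - β) / 2) : ℂ) • (1 : Matrix (Fin n) (Fin n) ℂ) +
          (Complex.I * (Real.sin ((α - β) / 2) : ℂ)) • M)) :
    ∃ μ ν : ℝ → ℂ, ∀ k : ℝ, 0 < k →
      (((k : ℂ) - 1) • U + ((k : ℂ) + 1) • (1 : Matrix (Fin n) (Fin n) ℂ))⁻¹ *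
          (((k : ℂ) + 1) • U + ((k : ℂ) - 1) • (1 : Matrix (Fin n) (Fin n) ℂ)) =
        μ k • (1 : Matrix (Fin n) (Fin n) ℂ) + ν k • M := by
  have hM2 : M * M = 1 := by simpa [star_eq_conjTranspose, hM.eq] using hMu.1
  set a := Complex.exp (Complex.I * α)
  set b := Complex.exp (Complex.I * β)
  have hden : ∀ k : ℝ, 0 < k → ∀ θ : ℝ,
      ((k : ℂ) - 1) * Complex.exp (Complex.I * θ) + ((k : ℂ) + 1) ≠ 0 := fun k hk θ =>
    scalarScattering_denom_ne_zero hk (by rw [mul_comm]; exact Complex.norm_exp_ofReal_mul_I θ)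
  refine ⟨fun k => (scalarScattering k a + scalarScattering k b) / 2,
    fun k => (scalarScattering k a - scalarScattering k b) / 2, fun k hk => ?_⟩
  rw [hU, exp_smul_cos_add_sin_smul_eq_ofInvolutionEigenvalues,
    smul_ofInvolutionEigenvalues_add_smul_one, smul_ofInvolutionEigenvalues_add_smul_one,
    inv_ofInvolutionEigenvalues hM2 (hden k hk α) (hden k hk β), ofInvolutionEigenvalues_mul hM2]
  rfl

theorem stmt_11 (n : ℕ) (α β : ℝ)
    (hα : α ∈ Set.Ioc (-π) π) (hβ : β ∈ Set.Ioc (-π) π)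
    (M : Matrix (Fin n) (Fin n) ℂ)
    (hM : M.IsHermitian) (hMu : M ∈ Matrix.unitaryGroup (Fin n) ℂ)
    (U : Matrix (Fin n) (Fin n) ℂ)
    (hU : U = Complex.exp (Complex.I * ((α + β) / 2)) •
        ((Real.cos ((α - β) / 2) : ℂ) • (1 : Matrix (Fin n) (Fin n) ℂ) +
          (Complex.I * (Real.sin ((α - β) / 2) : ℂ)) • M)) :
    ∃ μ ν : ℝ → ℂ, ∀ k : ℝ, 0 < k →
      (((k : ℂ) - 1) • U + ((k : ℂ) + 1) • (1 : Matrix (Fin n) (Fin n) ℂ))⁻¹ *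
          (((k : ℂ) + 1) • U + ((k : ℂ) - 1) • (1 : Matrix (Fin n) (Fin n) ℂ)) =
        μ k • (1 : Matrix (Fin n) (Fin n) ℂ) + ν k • M :=
  stmt_11_general n α β M hM hMu U hU
end

section
/- Let α, β ∈ (−π, π] with sin((α−β)/2) ≠ 0, let M be an n×n Hermitian unitary complex matrix, and let U = exp(i(α+β)/2)·( cos((α−β)/2)·I + i·sin((α−β)/2)·M ). Then the scattering matrix S(k) is modularly permutation-symmetric for every real k > 0 if and only if M is modularly permutation-symmetric. -/
open Matrix Real

/-- A square matrix is modularly permutation-symmetric (MPS) if all its diagonal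
entries have the same modulus and all its off-diagonal entries have the same modulus. -/
def IsMPS {n : ℕ} (M : Matrix (Fin n) (Fin n) ℂ) : Prop :=
  ∃ r t : ℝ, 0 ≤ r ∧ 0 ≤ t ∧ (∀ j, ‖M j j‖ = r) ∧
    ∀ j l, j ≠ l → ‖M j l‖ = t

/-!
Since `M` is a Hermitian involution, the matrices `u P₊ + v P₋`, with `P±` the spectral projections
of `M`, multiply and invert coordinatewise in `(u, v)`. With `U = e^{iα} P₊ + e^{iβ} P₋` this gives
`S(k) = s(e^{iα}) P₊ + s(e^{iβ}) P₋`, where `s` is a Möbius map sending the unit circle injectively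
to itself. For `‖u‖ = ‖v‖` and `u ≠ v`, the matrix `((u + v)/2) I + ((u - v)/2) M` has off-diagonal
entries `((u - v)/2) M_jl` and diagonal entries of squared modulus
`‖(u + v)/2‖² + ‖(u - v)/2‖² M_jj²` (the `M_jj` being real), so it is MPS exactly when `M` is.
-/

open ComplexConjugate

lemma exists_nonneg_forall_eq_of_forall_eq {ι : Type*} (f : ι → ℝ) (hf : ∀ i, 0 ≤ f i)
    (h : ∀ i j, f i = f j) : ∃ r, 0 ≤ r ∧ ∀ i, f i = r := by
  rcases isEmpty_or_nonempty ι with hι | ⟨⟨i₀⟩⟩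
  · exact ⟨0, le_rfl, isEmptyElim⟩
  · exact ⟨f i₀, hf i₀, fun i => h i i₀⟩

lemma isMPS_iff {n : ℕ} (N : Matrix (Fin n) (Fin n) ℂ) :
    IsMPS N ↔ (∀ j j', ‖N j j‖ = ‖N j' j'‖) ∧
      ∀ j l j' l', j ≠ l → j' ≠ l' → ‖N j l‖ = ‖N j' l'‖ := by
  constructor
  · rintro ⟨r, t, -, -, hr, ht⟩
    exact ⟨fun j j' => by rw [hr, hr], fun j l j' l' h h' => by rw [ht _ _ h, ht _ _ h']⟩
  · rintro ⟨hdiag, hoff⟩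
    obtain ⟨r, hr0, hr⟩ :=
      exists_nonneg_forall_eq_of_forall_eq (fun j => ‖N j j‖) (fun _ => norm_nonneg _) hdiag
    obtain ⟨t, ht0, ht⟩ := exists_nonneg_forall_eq_of_forall_eq
      (fun p : {p : Fin n × Fin n // p.1 ≠ p.2} => ‖N p.1.1 p.1.2‖) (fun _ => norm_nonneg _)
      (fun p q => hoff _ _ _ _ p.2 q.2)
    exact ⟨r, t, hr0, ht0, hr, fun j l h => ht ⟨(j, l), h⟩⟩

lemma norm_add_mul_ofReal_sq {c d : ℂ} (hcd : ‖c + d‖ = ‖c - d‖) (x : ℝ) :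
    ‖c + d * x‖ ^ 2 = ‖c‖ ^ 2 + ‖d‖ ^ 2 * x ^ 2 := by
  have hcd' : (c * conj d).re = 0 := by
    have := congrArg (· ^ 2) hcd
    simp only [Complex.sq_norm, Complex.normSq_add, Complex.normSq_sub] at this
    linarith
  have hcross : (c * conj (d * x)).re = 0 := by
    rw [map_mul, Complex.conj_ofReal, ← mul_assoc, Complex.re_mul_ofReal, hcd', zero_mul]
  rw [Complex.sq_norm, Complex.sq_norm, Complex.sq_norm, Complex.normSq_add, hcross,
    Complex.normSq_mul, Complex.normSq_ofReal]
  ring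

lemma norm_add_mul_ofReal_eq_iff {c d : ℂ} (hd : d ≠ 0) (hcd : ‖c + d‖ = ‖c - d‖) (x y : ℝ) :
    ‖c + d * x‖ = ‖c + d * y‖ ↔ |x| = |y| := by
  rw [← sq_eq_sq₀ (norm_nonneg _) (norm_nonneg _), norm_add_mul_ofReal_sq hcd,
    norm_add_mul_ofReal_sq hcd, add_right_inj, mul_right_inj' (by positivity),
    sq_eq_sq_iff_abs_eq_abs]

section InvolCalc

variable {A : Type*} [Ring A] [Algebra ℂ A] {M : A}

/-- For an involution `M`, the element acting as `u` on the `+1`-eigenspace of `M` and as `v` on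
its `-1`-eigenspace. -/
noncomputable def involCalc (M : A) (u v : ℂ) : A := ((u + v) / 2) • 1 + ((u - v) / 2) • M

lemma smul_one_add_smul_eq_involCalc (c d : ℂ) :
    c • (1 : A) + d • M = involCalc M (c + d) (c - d) := by
  unfold involCalc
  congr 2 <;> ring

lemma smul_involCalc_add_smul_one (a b u v : ℂ) :
    a • involCalc M u v + b • 1 = involCalc M (a * u + b) (a * v + b) := by
  unfold involCalc
  module

lemma involCalc_one_one : involCalc M 1 1 = 1 := by
  simp [involCalc]

lemma involCalc_mul_involCalc (hM : M * M = 1) (u v u' v' : ℂ) :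
    involCalc M u v * involCalc M u' v' = involCalc M (u * u') (v * v') := by
  simp only [involCalc, add_mul, mul_add, smul_mul_assoc, mul_smul_comm, one_mul, mul_one, hM]
  module

end InvolCalc

lemma involCalc_inv {ι : Type*} [Fintype ι] [DecidableEq ι] {M : Matrix ι ι ℂ} (hM : M * M = 1)
    {u v : ℂ} (hu : u ≠ 0) (hv : v ≠ 0) : (involCalc M u v)⁻¹ = involCalc M u⁻¹ v⁻¹ := by
  apply Matrix.inv_eq_right_inv
  rw [involCalc_mul_involCalc hM, mul_inv_cancel₀ hu, mul_inv_cancel₀ hv, involCalc_one_one]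

lemma isMPS_involCalc_iff {n : ℕ} {M : Matrix (Fin n) (Fin n) ℂ} (hM : M.IsHermitian) {u v : ℂ}
    (huv : u ≠ v) (huv_norm : ‖u‖ = ‖v‖) : IsMPS (involCalc M u v) ↔ IsMPS M := by
  set c := (u + v) / 2
  set d := (u - v) / 2
  have hd : d ≠ 0 := div_ne_zero (sub_ne_zero.mpr huv) two_ne_zero
  have hcd : ‖c + d‖ = ‖c - d‖ := by
    rwa [show c + d = u by ring, show c - d = v by ring]
  have hdiag (j : Fin n) : M j j = ((M j j).re : ℂ) := (hM.coe_re_apply_self j).symm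
  rw [isMPS_iff, isMPS_iff]
  refine and_congr (forall₂_congr fun j j' => ?_) (forall₄_congr fun j l j' l' => ?_)
  · simp only [involCalc, Matrix.add_apply, Matrix.smul_apply, one_apply_eq, smul_eq_mul, mul_one]
    rw [hdiag j, hdiag j', norm_add_mul_ofReal_eq_iff hd hcd, Complex.norm_real,
      Complex.norm_real, Real.norm_eq_abs, Real.norm_eq_abs]
  · refine imp_congr_right fun hjl => imp_congr_right fun hjl' => ?_
    simp only [involCalc, Matrix.add_apply, Matrix.smul_apply, one_apply_ne hjl,
      one_apply_ne hjl', smul_eq_mul, mul_zero, zero_add, norm_mul]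
    exact mul_right_inj' (norm_ne_zero_iff.mpr hd)

-- The scalar form of `U ↦ S(k)`.
noncomputable def cayley (k : ℝ) (w : ℂ) : ℂ := ((k + 1) * w + (k - 1)) / ((k - 1) * w + (k + 1))

section Cayley

variable {k : ℝ} {w : ℂ}

lemma cayley_denom_ne_zero (hk : 0 < k) (hw : ‖w‖ = 1) : ((k : ℂ) - 1) * w + (k + 1) ≠ 0 := by
  intro h
  have hnorm : ‖((k + 1 : ℝ) : ℂ)‖ = ‖((k - 1 : ℝ) : ℂ) * w‖ := by
    push_cast; rw [eq_neg_of_add_eq_zero_right h, norm_neg]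
  rw [norm_mul, hw, mul_one, Complex.norm_real, Complex.norm_real, Real.norm_eq_abs,
    Real.norm_eq_abs, abs_of_pos (by linarith)] at hnorm
  exact (abs_sub_lt_iff.mpr ⟨by linarith, by linarith⟩).ne' hnorm

-- On the unit circle, the numerator is `w` times the conjugate of the denominator.
lemma norm_cayley (hk : 0 < k) (hw : ‖w‖ = 1) : ‖cayley k w‖ = 1 := by
  have hwc : w * conj w = 1 := by
    rw [Complex.mul_conj', hw]; norm_num
  have hnum : ((k : ℂ) + 1) * w + (k - 1) = w * conj (((k : ℂ) - 1) * w + (k + 1)) := by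
    simp only [map_add, map_sub, map_mul, map_one, Complex.conj_ofReal]
    linear_combination (1 - (k : ℂ)) * hwc
  rw [cayley, norm_div, hnum, norm_mul, hw, one_mul, Complex.norm_conj,
    div_self (norm_ne_zero_iff.mpr (cayley_denom_ne_zero hk hw))]

lemma cayley_injOn (hk : 0 < k) : Set.InjOn (cayley k) (Metric.sphere 0 1) := by
  intro w hw w' hw' h
  rw [mem_sphere_zero_iff_norm] at hw hw'
  rw [cayley, cayley, div_eq_div_iff (cayley_denom_ne_zero hk hw) (cayley_denom_ne_zero hk hw')]
    at h
  have hk' : (4 * k : ℂ) ≠ 0 := by exact_mod_cast (by positivity : 4 * k ≠ 0)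
  apply mul_left_cancel₀ hk'
  linear_combination h

end Cayley

lemma scattering_involCalc {ι : Type*} [Fintype ι] [DecidableEq ι] {M : Matrix ι ι ℂ}
    (hM : M * M = 1) {k : ℝ} (hk : 0 < k) {u v : ℂ} (hu : ‖u‖ = 1) (hv : ‖v‖ = 1) :
    (((k : ℂ) - 1) • involCalc M u v + ((k : ℂ) + 1) • 1)⁻¹ *
        (((k : ℂ) + 1) • involCalc M u v + ((k : ℂ) - 1) • 1) =
      involCalc M (cayley k u) (cayley k v) := by
  rw [smul_involCalc_add_smul_one, smul_involCalc_add_smul_one,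
    involCalc_inv hM (cayley_denom_ne_zero hk hu) (cayley_denom_ne_zero hk hv),
    involCalc_mul_involCalc hM, cayley, cayley, div_eq_inv_mul, div_eq_inv_mul]

theorem stmt_13_general (n : ℕ) (α β : ℝ)
    (hsin : Real.sin ((α - β) / 2) ≠ 0)
    (M : Matrix (Fin n) (Fin n) ℂ)
    (hM : M.IsHermitian) (hMu : M ∈ Matrix.unitaryGroup (Fin n) ℂ)
    (U : Matrix (Fin n) (Fin n) ℂ)
    (hU : U = Complex.exp (Complex.I * ((α + β) / 2)) •
        ((Real.cos ((α - β) / 2) : ℂ) • (1 : Matrix (Fin n) (Fin n) ℂ) +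
          (Complex.I * (Real.sin ((α - β) / 2) : ℂ)) • M)) :
    (∀ k : ℝ, 0 < k →
        IsMPS ((((k : ℂ) - 1) • U + ((k : ℂ) + 1) • (1 : Matrix (Fin n) (Fin n) ℂ))⁻¹ *
          (((k : ℂ) + 1) • U + ((k : ℂ) - 1) • (1 : Matrix (Fin n) (Fin n) ℂ)))) ↔
      IsMPS M := by
  set e := Complex.exp (Complex.I * ((α + β) / 2))
  set θ := (α - β) / 2
  have hM2 : M * M = 1 := by
    simpa [Matrix.star_eq_conjTranspose, hM.eq] using (Unitary.mem_iff.mp hMu).1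
  have he : ‖e‖ = 1 := by simp [e, Complex.norm_exp]
  -- `U` acts as `e^{iα}` on the `+1`-eigenspace of `M` and as `e^{iβ}` on the `-1`-eigenspace.
  set u := e * (Real.cos θ + Real.sin θ * Complex.I)
  set v := e * (Real.cos (-θ) + Real.sin (-θ) * Complex.I)
  have hUuv : U = involCalc M u v := by
    rw [hU, smul_add, smul_smul, smul_smul, smul_one_add_smul_eq_involCalc]
    simp only [u, v, Real.cos_neg, Real.sin_neg]
    congr 1 <;> push_cast <;> ring
  have hnorm (x : ℝ) : ‖e * (Real.cos x + Real.sin x * Complex.I)‖ = 1 := by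
    rw [norm_mul, he, Complex.ofReal_cos, Complex.ofReal_sin, Complex.norm_cos_add_sin_mul_I,
      one_mul]
  have hu : ‖u‖ = 1 := hnorm θ
  have hv : ‖v‖ = 1 := hnorm (-θ)
  have huv : u ≠ v := by
    rw [Ne, ← sub_eq_zero, show u - v = 2 * e * Complex.I * Real.sin θ by
      simp only [u, v, Real.cos_neg, Real.sin_neg]; push_cast; ring]
    exact mul_ne_zero (mul_ne_zero (mul_ne_zero two_ne_zero (Complex.exp_ne_zero _))
      Complex.I_ne_zero) (Complex.ofReal_ne_zero.mpr hsin)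
  have hS (k : ℝ) (hk : 0 < k) :
      IsMPS ((((k : ℂ) - 1) • U + ((k : ℂ) + 1) • 1)⁻¹ * (((k : ℂ) + 1) • U + ((k : ℂ) - 1) • 1))
        ↔ IsMPS M := by
    rw [hUuv, scattering_involCalc hM2 hk hu hv]
    exact isMPS_involCalc_iff hM (fun h => huv (cayley_injOn hk (by simpa using hu)
      (by simpa using hv) h)) (by rw [norm_cayley hk hu, norm_cayley hk hv])
  exact ⟨fun h => (hS 1 one_pos).mp (h 1 one_pos), fun h k hk => (hS k hk).mpr h⟩

theorem stmt_13 (n : ℕ) (α β : ℝ)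
    (hα : α ∈ Set.Ioc (-π) π) (hβ : β ∈ Set.Ioc (-π) π)
    (hsin : Real.sin ((α - β) / 2) ≠ 0)
    (M : Matrix (Fin n) (Fin n) ℂ)
    (hM : M.IsHermitian) (hMu : M ∈ Matrix.unitaryGroup (Fin n) ℂ)
    (U : Matrix (Fin n) (Fin n) ℂ)
    (hU : U = Complex.exp (Complex.I * ((α + β) / 2)) •
        ((Real.cos ((α - β) / 2) : ℂ) • (1 : Matrix (Fin n) (Fin n) ℂ) +
          (Complex.I * (Real.sin ((α - β) / 2) : ℂ)) • M)) :
    (∀ k : ℝ, 0 < k →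
        IsMPS ((((k : ℂ) - 1) • U + ((k : ℂ) + 1) • (1 : Matrix (Fin n) (Fin n) ℂ))⁻¹ *
          (((k : ℂ) + 1) • U + ((k : ℂ) - 1) • (1 : Matrix (Fin n) (Fin n) ℂ)))) ↔
      IsMPS M :=
  stmt_13_general n α β hsin M hM hMu U hU
end

section
/- Let α, β ∈ (−π, π] with sin((α−β)/2) ≠ 0, let M be an n×n non-diagonal Hermitian unitary modularly permutation-symmetric complex matrix with |M_{jj}| = r, |M_{jℓ}| = t > 0 (j ≠ ℓ), d = r/t, and let U = exp(i(α+β)/2)·( cos((α−β)/2)·I + i·sin((α−β)/2)·M ). Then for every real k > 0 and all indices j ≠ ℓ, the ratio ρ(k) = |S(k)_{jj}|² / |S(k)_{jℓ}|² satisfies ρ(k) = d² + (d² + n − 1)·( k·cos(α/2)cos(β/2) + (1/k)·sin(α/2)sin(β/2) )² / sin²((α−β)/2). -/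
/-
Since `M` is Hermitian and unitary, `M² = 1`, so with `P± = (1 ± M) / 2` the matrices `x P₊ + y P₋`
multiply and invert entrywise in `(x, y)`. The given `U` is `e^{iα} P₊ + e^{iβ} P₋`, hence
`S(k) = s(e^{iα}) P₊ + s(e^{iβ}) P₋` for the scalar map `s(z) = ((k+1)z + k-1) / ((k-1)z + k+1)`, and
`s(e^{iθ}) = w / w̄` with `w = k cos(θ/2) + i sin(θ/2)`. For unimodular `x = w_α / w̄_α`, `y = w_β / w̄_β`
one has `(x + y) / (x - y) = -i Re(w_α w̄_β) / Im(w_α w̄_β)`, where `Im(w_α w̄_β) = k sin((α - β)/2)`.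
The diagonal entry `M_jj` is real with square `r²`, and unitarity of the rows gives `r² + (n-1)t² = 1`,
i.e. `1 / t² = d² + n - 1`.
-/

open Matrix Real ComplexConjugate

/-- The factor by which `S(k)` acts on an eigenvector of `U` with eigenvalue `z`. -/
def scatteringCoeff {K : Type*} [Field K] (k z : K) : K :=
  ((k + 1) * z + (k - 1)) / ((k - 1) * z + (k + 1))

namespace Matrix

section Involution

variable {K ι : Type*} [Field K] [DecidableEq ι]

/-- For an involution `M`, this is `f M` for any function `f` with `f 1 = x` and `f (-1) = y`. -/
def involutionEval (M : Matrix ι ι K) (x y : K) : Matrix ι ι K :=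
  ((x + y) / 2) • 1 + ((x - y) / 2) • M

variable {M : Matrix ι ι K}

theorem involutionEval_apply_of_ne {j l : ι} (h : j ≠ l) (x y : K) :
    involutionEval M x y j l = (x - y) / 2 * M j l := by
  simp [involutionEval, one_apply_ne h]

variable [CharZero K]

theorem involutionEval_apply_self (x y : K) (j : ι) :
    involutionEval M x y j j = ((x + y) + (x - y) * M j j) / 2 := by
  simp only [involutionEval, add_apply, smul_apply, one_apply_eq, smul_eq_mul]
  ring

theorem involutionEval_one_one : involutionEval M 1 1 = 1 := by
  simp [involutionEval]

theorem smul_involutionEval_add_smul_one (a b x y : K) :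
    a • involutionEval M x y + b • 1 = involutionEval M (a * x + b) (a * y + b) := by
  simp only [involutionEval]
  module

variable [Fintype ι]

theorem involutionEval_mul (hM : M * M = 1) (x y x' y' : K) :
    involutionEval M x y * involutionEval M x' y' = involutionEval M (x * x') (y * y') := by
  simp only [involutionEval, add_mul, mul_add, smul_mul_assoc, mul_smul_comm, one_mul, mul_one, hM]
  module

theorem inv_involutionEval (hM : M * M = 1) {x y : K} (hx : x ≠ 0) (hy : y ≠ 0) :
    (involutionEval M x y)⁻¹ = involutionEval M x⁻¹ y⁻¹ :=
  inv_eq_right_inv <| by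
    rw [involutionEval_mul hM, mul_inv_cancel₀ hx, mul_inv_cancel₀ hy, involutionEval_one_one]

theorem involutionEval_scattering (hM : M * M = 1) (k : K) {x y : K}
    (hx : (k - 1) * x + (k + 1) ≠ 0) (hy : (k - 1) * y + (k + 1) ≠ 0) :
    ((k - 1) • involutionEval M x y + (k + 1) • 1)⁻¹ *
        ((k + 1) • involutionEval M x y + (k - 1) • 1) =
      involutionEval M (scatteringCoeff k x) (scatteringCoeff k y) := by
  rw [smul_involutionEval_add_smul_one, smul_involutionEval_add_smul_one,
    inv_involutionEval hM hx hy, involutionEval_mul hM, scatteringCoeff, scatteringCoeff,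
    div_eq_inv_mul, div_eq_inv_mul]

end Involution

theorem norm_sq_div_norm_sq_involutionEval {K ι : Type*} [NormedField K] [CharZero K]
    [DecidableEq ι] (M : Matrix ι ι K) (x y : K) {j l : ι} (h : j ≠ l) :
    ‖involutionEval M x y j j‖ ^ 2 / ‖involutionEval M x y j l‖ ^ 2 =
      ‖((x + y) + (x - y) * M j j) / (x - y)‖ ^ 2 / ‖M j l‖ ^ 2 := by
  have h2 : ‖(2 : K)‖ ^ 2 ≠ 0 := by simp
  rw [involutionEval_apply_self, involutionEval_apply_of_ne h, norm_div, norm_mul, norm_div,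
    norm_div, div_pow, mul_pow, div_pow, div_pow, div_mul_eq_mul_div,
    div_div_div_cancel_right₀ h2, div_div]

theorem involutionEval_exp_mul_I {ι : Type*} [DecidableEq ι] (M : Matrix ι ι ℂ)
    (α β : ℝ) :
    involutionEval M (Complex.exp (α * Complex.I)) (Complex.exp (β * Complex.I)) =
      Complex.exp (Complex.I * ((α + β) / 2)) •
        ((Real.cos ((α - β) / 2) : ℂ) • (1 : Matrix ι ι ℂ) +
          (Complex.I * (Real.sin ((α - β) / 2) : ℂ)) • M) := by
  have hα : Complex.exp (α * Complex.I) = Complex.exp (Complex.I * ((α + β) / 2)) *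
      (Real.cos ((α - β) / 2) + Real.sin ((α - β) / 2) * Complex.I) := by
    rw [Complex.ofReal_cos, Complex.ofReal_sin, Complex.cos_add_sin_I, ← Complex.exp_add]
    push_cast
    ring_nf
  have hβ : Complex.exp (β * Complex.I) = Complex.exp (Complex.I * ((α + β) / 2)) *
      (Real.cos ((α - β) / 2) - Real.sin ((α - β) / 2) * Complex.I) := by
    rw [Complex.ofReal_cos, Complex.ofReal_sin, ← Complex.cos_neg, sub_eq_add_neg, ← neg_mul,
      ← Complex.sin_neg, Complex.cos_add_sin_I, ← Complex.exp_add]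
    push_cast
    ring_nf
  rw [involutionEval, hα, hβ]
  module

variable {𝕜 ι : Type*} [RCLike 𝕜] [Fintype ι] [DecidableEq ι]

theorem IsHermitian.mul_self_eq_one_of_mem_unitaryGroup {M : Matrix ι ι 𝕜} (hM : M.IsHermitian)
    (hMu : M ∈ unitaryGroup ι 𝕜) : M * M = 1 := by
  simpa [star_eq_conjTranspose, hM.eq] using mem_unitaryGroup_iff'.mp hMu

theorem sum_norm_sq_apply_eq_one_of_mem_unitaryGroup {U : Matrix ι ι 𝕜}
    (hU : U ∈ unitaryGroup ι 𝕜) (j : ι) : ∑ l, ‖U j l‖ ^ 2 = 1 := by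
  have h := congrFun (congrFun (mem_unitaryGroup_iff.mp hU) j) j
  simp only [mul_apply, star_apply, one_apply_eq, RCLike.star_def, RCLike.mul_conj] at h
  exact_mod_cast h

theorem sq_add_card_sub_one_mul_sq_eq_one {U : Matrix ι ι 𝕜} (hU : U ∈ unitaryGroup ι 𝕜)
    {j : ι} {r t : ℝ} (hr : ‖U j j‖ = r) (ht : ∀ l, l ≠ j → ‖U j l‖ = t) :
    r ^ 2 + ((Fintype.card ι : ℝ) - 1) * t ^ 2 = 1 := by
  have hoff : ∑ l ∈ Finset.univ.erase j, ‖U j l‖ ^ 2 = ((Fintype.card ι : ℝ) - 1) * t ^ 2 := by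
    rw [Finset.sum_congr rfl fun l hl => by rw [ht l (Finset.ne_of_mem_erase hl)],
      Finset.sum_const, Finset.card_erase_of_mem (Finset.mem_univ j), Finset.card_univ,
      nsmul_eq_mul, Nat.cast_sub (Fintype.card_pos_iff.mpr ⟨j⟩), Nat.cast_one]
  rw [← hr, ← hoff, Finset.add_sum_erase _ (fun l => ‖U j l‖ ^ 2) (Finset.mem_univ j)]
  exact sum_norm_sq_apply_eq_one_of_mem_unitaryGroup hU j

end Matrix

namespace Complex

theorem sub_one_mul_add_add_one_ne_zero_s15 {k : ℝ} (hk : 0 < k) {z : ℂ} (hz : ‖z‖ = 1) :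
    ((k : ℂ) - 1) * z + (k + 1) ≠ 0 := by
  intro h
  have hnorm := congrArg norm (eq_neg_of_add_eq_zero_left h)
  rw [norm_mul, hz, mul_one, norm_neg, ← ofReal_one, ← ofReal_sub, ← ofReal_add, norm_real,
    norm_real, Real.norm_eq_abs, Real.norm_eq_abs, abs_of_pos (by linarith : 0 < k + 1)] at hnorm
  cases abs_cases (k - 1) <;> linarith

theorem exp_mul_I_eq_sq (θ : ℝ) :
    exp (θ * I) = ((Real.cos (θ / 2) : ℂ) + Real.sin (θ / 2) * I) ^ 2 := by
  rw [ofReal_cos, ofReal_sin, cos_add_sin_I, ← exp_nat_mul]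
  push_cast
  ring_nf

theorem mul_cos_add_sin_mul_I_ne_zero {k : ℝ} (hk : 0 < k) (θ : ℝ) :
    (k * Real.cos θ : ℂ) + Real.sin θ * I ≠ 0 := by
  intro h
  have hre : k * Real.cos θ = 0 := by simpa [-ofReal_cos] using congrArg re h
  have him : Real.sin θ = 0 := by simpa [-ofReal_sin] using congrArg im h
  have hcos : Real.cos θ = 0 := (mul_eq_zero.mp hre).resolve_left hk.ne'
  simpa [hcos, him] using Real.cos_sq_add_sin_sq θ

theorem scatteringCoeff_exp_mul_I {k : ℝ} (hk : 0 < k) (θ : ℝ) :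
    scatteringCoeff (k : ℂ) (exp (θ * I)) =
      ((k * Real.cos (θ / 2) : ℂ) + Real.sin (θ / 2) * I) /
        conj ((k * Real.cos (θ / 2) : ℂ) + Real.sin (θ / 2) * I) := by
  have hp := mul_cos_add_sin_mul_I_ne_zero hk (θ / 2)
  rw [scatteringCoeff, div_eq_div_iff
    (sub_one_mul_add_add_one_ne_zero_s15 hk (norm_exp_ofReal_mul_I θ)) ((map_ne_zero _).mpr hp),
    exp_mul_I_eq_sq]
  simp only [map_add, map_mul, conj_ofReal, conj_I]
  have h : (Real.cos (θ / 2) : ℂ) ^ 2 + (Real.sin (θ / 2) : ℂ) ^ 2 = 1 := by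
    exact_mod_cast Real.cos_sq_add_sin_sq (θ / 2)
  linear_combination 2 * (k : ℂ) * ((Real.cos (θ / 2) : ℂ) + Real.sin (θ / 2) * I) * h
    - 2 * k * Real.sin (θ / 2) ^ 2 * (Real.cos (θ / 2) + Real.sin (θ / 2) * I) * I_sq

theorem re_mul_conj_mul_cos_add_sin_mul_I (k a b : ℝ) :
    (((k * Real.cos a : ℂ) + Real.sin a * I) * conj ((k * Real.cos b : ℂ) + Real.sin b * I)).re =
      k ^ 2 * Real.cos a * Real.cos b + Real.sin a * Real.sin b := by
  simp only [mul_re, mul_im, add_re, add_im, conj_re, conj_im, ofReal_re, ofReal_im, I_re, I_im]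
  ring

theorem im_mul_conj_mul_cos_add_sin_mul_I (k a b : ℝ) :
    (((k * Real.cos a : ℂ) + Real.sin a * I) * conj ((k * Real.cos b : ℂ) + Real.sin b * I)).im =
      k * Real.sin (a - b) := by
  simp only [mul_re, mul_im, add_re, add_im, conj_re, conj_im, ofReal_re, ofReal_im, I_re, I_im]
  rw [Real.sin_sub]
  ring

theorem norm_sq_add_sub_mul_div_sub_of_div_conj {p q : ℂ} (hp : p ≠ 0) (hq : q ≠ 0) (hv : (p * conj q).im ≠ 0)
    (m : ℝ) :
    ‖((p / conj p + q / conj q) + (p / conj p - q / conj q) * m) / (p / conj p - q / conj q)‖ ^ 2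
      = m ^ 2 + ((p * conj q).re / (p * conj q).im) ^ 2 := by
  set u := (p * conj q).re
  set v := (p * conj q).im
  have hX : p * conj q = u + v * I := (re_add_im _).symm
  have hX' : conj p * q = u - v * I := by
    simpa [sub_eq_add_neg] using congrArg conj hX
  have hpq : conj p * conj q ≠ 0 := mul_ne_zero ((map_ne_zero _).mpr hp) ((map_ne_zero _).mpr hq)
  have hsum : p / conj p + q / conj q = 2 * u / (conj p * conj q) := by
    rw [div_add_div _ _ ((map_ne_zero _).mpr hp) ((map_ne_zero _).mpr hq)]
    congr 1
    linear_combination hX + hX'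
  have hdiff : p / conj p - q / conj q = 2 * v * I / (conj p * conj q) := by
    rw [div_sub_div _ _ ((map_ne_zero _).mpr hp) ((map_ne_zero _).mpr hq)]
    congr 1
    linear_combination hX - hX'
  have hquot : ((p / conj p + q / conj q) + (p / conj p - q / conj q) * m) /
      (p / conj p - q / conj q) = m + (-(u / v) : ℝ) * I := by
    rw [hsum, hdiff, div_mul_eq_mul_div, ← add_div, div_div_div_cancel_right₀ hpq,
      div_eq_iff (by simp [hv, I_ne_zero])]
    have hv' : (v : ℂ) ≠ 0 := ofReal_ne_zero.mpr hv
    push_cast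
    field_simp
    linear_combination (u : ℂ) * I_sq
  rw [hquot, Complex.sq_norm, normSq_add_mul_I, neg_sq]

end Complex

theorem stmt_15_general (n : ℕ) (α β : ℝ)
    (hsin : Real.sin ((α - β) / 2) ≠ 0)
    (M : Matrix (Fin n) (Fin n) ℂ)
    (hM : M.IsHermitian) (hMu : M ∈ Matrix.unitaryGroup (Fin n) ℂ)
    (r t : ℝ) (ht0 : 0 < t)
    (hr : ∀ j, ‖M j j‖ = r)
    (ht : ∀ j l, j ≠ l → ‖M j l‖ = t)
    (d : ℝ) (hd : d = r / t)
    (U : Matrix (Fin n) (Fin n) ℂ)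
    (hU : U = Complex.exp (Complex.I * ((α + β) / 2)) •
        ((Real.cos ((α - β) / 2) : ℂ) • (1 : Matrix (Fin n) (Fin n) ℂ) +
          (Complex.I * (Real.sin ((α - β) / 2) : ℂ)) • M)) :
    ∀ k : ℝ, 0 < k → ∀ j l : Fin n, j ≠ l →
      ‖(((((k : ℂ) - 1) • U + ((k : ℂ) + 1) • (1 : Matrix (Fin n) (Fin n) ℂ))⁻¹ *
            (((k : ℂ) + 1) • U + ((k : ℂ) - 1) • (1 : Matrix (Fin n) (Fin n) ℂ))) j j)‖ ^ 2 /
          ‖(((((k : ℂ) - 1) • U + ((k : ℂ) + 1) • (1 : Matrix (Fin n) (Fin n) ℂ))⁻¹ *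
            (((k : ℂ) + 1) • U + ((k : ℂ) - 1) • (1 : Matrix (Fin n) (Fin n) ℂ))) j l)‖ ^ 2 =
        d ^ 2 + (d ^ 2 + n - 1) *
          (k * Real.cos (α / 2) * Real.cos (β / 2)
            + (1 / k) * Real.sin (α / 2) * Real.sin (β / 2)) ^ 2 /
          Real.sin ((α - β) / 2) ^ 2 := by
  intro k hk j l hjl
  have hden (θ : ℝ) : ((k : ℂ) - 1) * Complex.exp (θ * Complex.I) + (k + 1) ≠ 0 :=
    Complex.sub_one_mul_add_add_one_ne_zero_s15 hk (Complex.norm_exp_ofReal_mul_I θ)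
  have hre := Complex.re_mul_conj_mul_cos_add_sin_mul_I k (α / 2) (β / 2)
  have him := Complex.im_mul_conj_mul_cos_add_sin_mul_I k (α / 2) (β / 2)
  rw [← sub_div] at him
  have hmre : ((M j j).re : ℂ) = M j j := hM.coe_re_apply_self j
  have hm : (M j j).re ^ 2 = r ^ 2 := by
    rw [← hr j, ← sq_abs, ← Real.norm_eq_abs, ← Complex.norm_real, hmre]
  have hnorm := sq_add_card_sub_one_mul_sq_eq_one hMu (hr j) fun l hl => ht j l hl.symm
  rw [Fintype.card_fin] at hnorm
  rw [hU, ← involutionEval_exp_mul_I,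
    involutionEval_scattering (hM.mul_self_eq_one_of_mem_unitaryGroup hMu) _ (hden α) (hden β),
    norm_sq_div_norm_sq_involutionEval _ _ _ hjl, Complex.scatteringCoeff_exp_mul_I hk,
    Complex.scatteringCoeff_exp_mul_I hk, ← hmre,
    Complex.norm_sq_add_sub_mul_div_sub_of_div_conj (Complex.mul_cos_add_sin_mul_I_ne_zero hk _)
      (Complex.mul_cos_add_sin_mul_I_ne_zero hk _) (him ▸ mul_ne_zero hk.ne' hsin),
    hre, him, hm, ht j l hjl, hd]
  field_simp
  linear_combination
    -(k ^ 2 * Real.cos (α / 2) * Real.cos (β / 2) + Real.sin (α / 2) * Real.sin (β / 2)) ^ 2 * hnorm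

theorem stmt_15 (n : ℕ) (α β : ℝ)
    (hα : α ∈ Set.Ioc (-π) π) (hβ : β ∈ Set.Ioc (-π) π)
    (hsin : Real.sin ((α - β) / 2) ≠ 0)
    (M : Matrix (Fin n) (Fin n) ℂ)
    (hM : M.IsHermitian) (hMu : M ∈ Matrix.unitaryGroup (Fin n) ℂ)
    (hnd : ¬ M.IsDiag)
    (r t : ℝ) (ht0 : 0 < t)
    (hr : ∀ j, ‖M j j‖ = r)
    (ht : ∀ j l, j ≠ l → ‖M j l‖ = t)
    (d : ℝ) (hd : d = r / t)
    (U : Matrix (Fin n) (Fin n) ℂ)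
    (hU : U = Complex.exp (Complex.I * ((α + β) / 2)) •
        ((Real.cos ((α - β) / 2) : ℂ) • (1 : Matrix (Fin n) (Fin n) ℂ) +
          (Complex.I * (Real.sin ((α - β) / 2) : ℂ)) • M)) :
    ∀ k : ℝ, 0 < k → ∀ j l : Fin n, j ≠ l →
      ‖(((((k : ℂ) - 1) • U + ((k : ℂ) + 1) • (1 : Matrix (Fin n) (Fin n) ℂ))⁻¹ *
            (((k : ℂ) + 1) • U + ((k : ℂ) - 1) • (1 : Matrix (Fin n) (Fin n) ℂ))) j j)‖ ^ 2 /
          ‖(((((k : ℂ) - 1) • U + ((k : ℂ) + 1) • (1 : Matrix (Fin n) (Fin n) ℂ))⁻¹ *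
            (((k : ℂ) + 1) • U + ((k : ℂ) - 1) • (1 : Matrix (Fin n) (Fin n) ℂ))) j l)‖ ^ 2 =
        d ^ 2 + (d ^ 2 + n - 1) *
          (k * Real.cos (α / 2) * Real.cos (β / 2)
            + (1 / k) * Real.sin (α / 2) * Real.sin (β / 2)) ^ 2 /
          Real.sin ((α - β) / 2) ^ 2 :=
  stmt_15_general n α β hsin M hM hMu r t ht0 hr ht d hd U hU
end

section
/- Let ξ ∈ (−π/2, π/2) with ξ ≠ 0 and tan ξ > 0. Then the set F_ξ = { ( cos²(α/2)cos²(β/2) + sin²(α/2)sin²(β/2) ) / sin²((α−β)/2) : α, β ∈ (−π, π) \ {0}, α ≠ β, tan(α/2)·tan(β/2) = tan ξ } equals the open interval (0, +∞). -/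
open Real

theorem stmt_18 (ξ : ℝ) (hξ : ξ ∈ Set.Ioo (-(π / 2)) (π / 2)) (hξ0 : ξ ≠ 0)
    (hpos : 0 < Real.tan ξ) :
    {x : ℝ | ∃ α β : ℝ, α ∈ Set.Ioo (-π) π ∧ β ∈ Set.Ioo (-π) π ∧
        α ≠ 0 ∧ β ≠ 0 ∧ α ≠ β ∧
        Real.tan (α / 2) * Real.tan (β / 2) = Real.tan ξ ∧
        x = (Real.cos (α / 2) ^ 2 * Real.cos (β / 2) ^ 2 +
              Real.sin (α / 2) ^ 2 * Real.sin (β / 2) ^ 2) /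
            Real.sin ((α - β) / 2) ^ 2} = Set.Ioi 0 := by
  have hπ := Real.pi_pos
  ext x
  simp only [Set.mem_setOf_eq, Set.mem_Ioi]
  constructor
  · rintro ⟨α, β, hα, hβ, hα0, hβ0, hαβ, htan, rfl⟩
    have hca : 0 < Real.cos (α / 2) := by
      apply Real.cos_pos_of_mem_Ioo
      constructor <;> [linarith [hα.1]; linarith [hα.2]]
    have hcb : 0 < Real.cos (β / 2) := by
      apply Real.cos_pos_of_mem_Ioo
      constructor <;> [linarith [hβ.1]; linarith [hβ.2]]
    have hs : Real.sin ((α - β) / 2) ≠ 0 := by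
      intro h
      have h1 : -π < (α - β) / 2 := by linarith [hα.1, hβ.2]
      have h2 : (α - β) / 2 < π := by linarith [hα.2, hβ.1]
      have := (Real.sin_eq_zero_iff_of_lt_of_lt h1 h2).mp h
      apply hαβ; linarith
    apply div_pos
    · have := sq_nonneg (Real.sin (α / 2) * Real.sin (β / 2))
      nlinarith [mul_pos (mul_pos hca hca) (mul_pos hcb hcb)]
    · positivity
  · intro hx
    set t := Real.tan ξ with ht
    set d := Real.sqrt ((1 + t ^ 2) / x) with hd
    set s := Real.sqrt (d ^ 2 + 4 * t) with hs
    have hdx : (0:ℝ) < (1 + t ^ 2) / x := by positivity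
    have hd0 : 0 < d := Real.sqrt_pos.mpr hdx
    have hd2 : d ^ 2 = (1 + t ^ 2) / x := Real.sq_sqrt hdx.le
    have hs2 : s ^ 2 = d ^ 2 + 4 * t := Real.sq_sqrt (by positivity)
    have hs0 : 0 < s := Real.sqrt_pos.mpr (by positivity)
    have hsd : d < s := by nlinarith
    obtain ⟨a, b, ha0, hb0, hab, hamb⟩ :
        ∃ a b : ℝ, 0 < a ∧ 0 < b ∧ a * b = t ∧ a - b = d := by
      refine ⟨(s + d) / 2, (s - d) / 2, by positivity, by linarith, by nlinarith, by ring⟩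
    refine ⟨2 * Real.arctan a, 2 * Real.arctan b, ?_, ?_, ?_, ?_, ?_, ?_, ?_⟩
    · constructor <;> nlinarith [Real.arctan_mem_Ioo a |>.1, Real.arctan_mem_Ioo a |>.2]
    · constructor <;> nlinarith [Real.arctan_mem_Ioo b |>.1, Real.arctan_mem_Ioo b |>.2]
    · have := Real.arctan_strictMono ha0
      rw [Real.arctan_zero] at this
      positivity
    · have := Real.arctan_strictMono hb0
      rw [Real.arctan_zero] at this
      positivity
    · intro h
      have : Real.arctan a = Real.arctan b := by linarith
      have : a = b := Real.arctan_injective this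
      linarith
    · have e1 : 2 * Real.arctan a / 2 = Real.arctan a := by ring
      have e2 : 2 * Real.arctan b / 2 = Real.arctan b := by ring
      rw [e1, e2, Real.tan_arctan, Real.tan_arctan, hab]
    · have e1 : 2 * Real.arctan a / 2 = Real.arctan a := by ring
      have e2 : 2 * Real.arctan b / 2 = Real.arctan b := by ring
      have e3 : (2 * Real.arctan a - 2 * Real.arctan b) / 2 = Real.arctan a - Real.arctan b := by ring
      rw [e1, e2, e3, Real.sin_sub, Real.cos_arctan, Real.cos_arctan,
        Real.sin_arctan, Real.sin_arctan]
      have hA : Real.sqrt (1 + a ^ 2) > 0 := by positivity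
      have hB : Real.sqrt (1 + b ^ 2) > 0 := by positivity
      have hA2 : Real.sqrt (1 + a ^ 2) ^ 2 = 1 + a ^ 2 := Real.sq_sqrt (by positivity)
      have hB2 : Real.sqrt (1 + b ^ 2) ^ 2 = 1 + b ^ 2 := Real.sq_sqrt (by positivity)
      have hx0 : x ≠ 0 := ne_of_gt hx
      have hd2' : d ^ 2 * x = 1 + t ^ 2 := by
        field_simp at hd2; linarith
      have hden : a / Real.sqrt (1 + a ^ 2) * (1 / Real.sqrt (1 + b ^ 2)) -
          1 / Real.sqrt (1 + a ^ 2) * (b / Real.sqrt (1 + b ^ 2)) =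
          (a - b) / (Real.sqrt (1 + a ^ 2) * Real.sqrt (1 + b ^ 2)) := by
        field_simp
      rw [hden, hamb]
      rw [eq_div_iff (by positivity)]
      rw [div_pow, div_pow, div_pow, div_pow, div_pow, mul_pow, hA2, hB2]
      have key : x * d ^ 2 = 1 + (a * b) ^ 2 := by rw [hab]; linarith [hd2']
      have hne1 : (1 + a ^ 2) ≠ 0 := by positivity
      have hne2 : (1 + b ^ 2) ≠ 0 := by positivity
      field_simp
      linear_combination key
end

section
/- Let ξ ∈ (−π/2, π/2) with ξ ≠ 0 and tan ξ < 0. Then the set F_ξ = { ( cos²(α/2)cos²(β/2) + sin²(α/2)sin²(β/2) ) / sin²((α−β)/2) : α, β ∈ (−π, π) \ {0}, α ≠ β, tan(α/2)·tan(β/2) = tan ξ } equals the half-open interval (0, (1 + tan²ξ) / (4·|tan ξ|) ]. -/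
open Real

lemma cos_half_pos' (α : ℝ) (hα : α ∈ Set.Ioo (-π) π) : 0 < Real.cos (α/2) := by
  apply Real.cos_pos_of_mem_Ioo
  obtain ⟨h1, h2⟩ := hα
  constructor <;> [linarith; linarith]

lemma expr_val (α β : ℝ) (hα : α ∈ Set.Ioo (-π) π) (hβ : β ∈ Set.Ioo (-π) π) :
    (Real.cos (α / 2) ^ 2 * Real.cos (β / 2) ^ 2 +
        Real.sin (α / 2) ^ 2 * Real.sin (β / 2) ^ 2) / Real.sin ((α - β) / 2) ^ 2
      = (1 + (Real.tan (α/2) * Real.tan (β/2))^2) /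
          (Real.tan (α/2) - Real.tan (β/2))^2 := by
  have hc1 := cos_half_pos' α hα
  have hc2 := cos_half_pos' β hβ
  set a := Real.tan (α/2) with ha
  set b := Real.tan (β/2) with hb
  have h1 : Real.sin (α/2) = a * Real.cos (α/2) := (Real.tan_mul_cos hc1.ne').symm
  have h2 : Real.sin (β/2) = b * Real.cos (β/2) := (Real.tan_mul_cos hc2.ne').symm
  have hsin : Real.sin ((α - β)/2) = Real.cos (α/2) * Real.cos (β/2) * (a - b) := by
    have h : (α - β)/2 = α/2 - β/2 := by ring
    rw [h, Real.sin_sub, h1, h2]; ring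
  have hnum : Real.cos (α/2)^2 * Real.cos (β/2)^2 + Real.sin (α/2)^2 * Real.sin (β/2)^2
      = Real.cos (α/2)^2 * Real.cos (β/2)^2 * (1 + (a*b)^2) := by
    rw [h1, h2]; ring
  rw [hnum, hsin]
  have hC : Real.cos (α/2)^2 * Real.cos (β/2)^2 ≠ 0 := by positivity
  rw [show (Real.cos (α/2) * Real.cos (β/2) * (a-b))^2
      = Real.cos (α/2)^2 * Real.cos (β/2)^2 * (a-b)^2 by ring,
    mul_div_mul_left _ _ hC]

theorem stmt_19 (ξ : ℝ) (hξ : ξ ∈ Set.Ioo (-(π / 2)) (π / 2)) (hξ0 : ξ ≠ 0)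
    (hneg : Real.tan ξ < 0) :
    {x : ℝ | ∃ α β : ℝ, α ∈ Set.Ioo (-π) π ∧ β ∈ Set.Ioo (-π) π ∧
        α ≠ 0 ∧ β ≠ 0 ∧ α ≠ β ∧
        Real.tan (α / 2) * Real.tan (β / 2) = Real.tan ξ ∧
        x = (Real.cos (α / 2) ^ 2 * Real.cos (β / 2) ^ 2 +
              Real.sin (α / 2) ^ 2 * Real.sin (β / 2) ^ 2) /
            Real.sin ((α - β) / 2) ^ 2} = Set.Ioc 0 ((1 + Real.tan ξ ^ 2) / (4 * |Real.tan ξ|)) := by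
  set t := Real.tan ξ with ht
  have habs : |t| = -t := abs_of_neg hneg
  have h1t : (0:ℝ) < 1 + t^2 := by positivity
  ext x
  simp only [Set.mem_setOf_eq, Set.mem_Ioc, habs]
  constructor
  · rintro ⟨α, β, hα, hβ, hα0, hβ0, hne, htan, rfl⟩
    rw [expr_val α β hα hβ, htan]
    set a := Real.tan (α/2)
    set b := Real.tan (β/2)
    have hsq : -4*t ≤ (a - b)^2 := by nlinarith [sq_nonneg (a+b), htan]
    have hpos : 0 < (a - b)^2 := by linarith
    constructor
    · positivity
    · rw [div_le_div_iff₀ hpos (by linarith)]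
      nlinarith
  · rintro ⟨hx0, hxle⟩
    set s := (1 + t^2)/x with hs
    have hs0 : 0 < s := by positivity
    have hsge : -4*t ≤ s := by
      rw [le_div_iff₀ (by linarith : (0:ℝ) < 4*(-t))] at hxle
      rw [hs, le_div_iff₀ hx0]
      nlinarith
    set d := Real.sqrt (s + 4*t) with hdd
    have hd2 : d^2 = s + 4*t := Real.sq_sqrt (by linarith)
    have hdnn : 0 ≤ d := Real.sqrt_nonneg _
    have hsq : Real.sqrt s ^ 2 = s := Real.sq_sqrt hs0.le
    have hsqpos : 0 < Real.sqrt s := Real.sqrt_pos.mpr hs0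
    set a := (Real.sqrt s + d)/2 with haa
    have ha : 0 < a := by rw [haa]; linarith
    have key : a^2 - Real.sqrt s * a - t = 0 := by
      rw [haa]; linear_combination (1/4) * hd2 - (1/4) * hsq
    set b := t/a with hbb
    have hab : a * b = t := by rw [hbb]; field_simp
    have hb : b < 0 := div_neg_of_neg_of_pos hneg ha
    have hdiff : a - b = Real.sqrt s := by
      rw [hbb]; field_simp; linear_combination key
    have hbnda : Real.arctan a ∈ Set.Ioo (-(π/2)) (π/2) :=
      ⟨Real.neg_pi_div_two_lt_arctan a, Real.arctan_lt_pi_div_two a⟩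
    have hbndb : Real.arctan b ∈ Set.Ioo (-(π/2)) (π/2) :=
      ⟨Real.neg_pi_div_two_lt_arctan b, Real.arctan_lt_pi_div_two b⟩
    have hmema : 2 * Real.arctan a ∈ Set.Ioo (-π) π :=
      ⟨by linarith [hbnda.1], by linarith [hbnda.2]⟩
    have hmemb : 2 * Real.arctan b ∈ Set.Ioo (-π) π :=
      ⟨by linarith [hbndb.1], by linarith [hbndb.2]⟩
    have hpa : 0 < Real.arctan a := by simpa using Real.arctan_strictMono ha
    have hpb : Real.arctan b < 0 := by simpa using Real.arctan_strictMono hb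
    have htana : Real.tan ((2 * Real.arctan a)/2) = a := by
      rw [show (2 * Real.arctan a)/2 = Real.arctan a by ring, Real.tan_arctan]
    have htanb : Real.tan ((2 * Real.arctan b)/2) = b := by
      rw [show (2 * Real.arctan b)/2 = Real.arctan b by ring, Real.tan_arctan]
    refine ⟨2 * Real.arctan a, 2 * Real.arctan b, hmema, hmemb, by linarith, by linarith,
      by intro h; linarith, by rw [htana, htanb, hab], ?_⟩
    rw [expr_val _ _ hmema hmemb, htana, htanb, hab, hdiff, hsq, hs]
    rw [div_div_eq_mul_div, mul_comm, mul_div_assoc, div_self h1t.ne', mul_one]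
end
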